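/- arXiv:1204.5414 — 4 statements merged into one kernel-verified Lean document; each statement's English description precedes it below -/
import Mathlib

section
/- Let G be a countable discrete group with a generating probability measure μ, and let Γ be a finite index subgroup of G. Then the random walk Z_n = X_1⋯X_n (with increments X_i i.i.d. of law μ) almost surely hits Γ at some time n ≥ 1, and the expected return time E[τ], where τ = min{n ≥ 1 : Z_n ∈ Γ}, equals the index [G : Γ]. -/
open scoped Classical BigOperators

open scoped ENNReal

/-- Probability that a `μ`-random walk started at `x` first hits the subgroup `Γ`
exactly at time `n`, at the element `γ`. -/
noncomputable def stepHit {G : Type*} [Group G] (μ : G → ℝ) (Γ : Subgroup G)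
    (x : G) (n : ℕ) (γ : G) : ℝ :=
  ∑' w : Fin n → G,
    if (∀ k, 1 ≤ k → k < n → x * ((List.ofFn w).take k).prod ∉ Γ) ∧
        x * (List.ofFn w).prod = γ
    then ∏ i, μ (w i) else 0

/-- Probability that the `μ`-random walk started at `x` first hits `Γ` at `γ`
(the hitting measure `θ_x`). -/
noncomputable def hitProb {G : Type*} [Group G] (μ : G → ℝ) (Γ : Subgroup G)
    (x γ : G) : ℝ :=
  ∑' n : ℕ, stepHit μ Γ x (n + 1) γ

/-- Probability that the `μ`-random walk started at the identity has not hit `Γ`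
during the first `n` steps, i.e. `P(τ > n)`. -/
noncomputable def tailProb {G : Type*} [Group G] (μ : G → ℝ) (Γ : Subgroup G)
    (n : ℕ) : ℝ :=
  ∑' w : Fin n → G,
    if ∀ k, 1 ≤ k → k ≤ n → ((List.ofFn w).take k).prod ∉ Γ
    then ∏ i, μ (w i) else 0


namespace KacAux

variable {G : Type*} [Group G]

noncomputable def qm (Γ : Subgroup G) (x : G) : G ⧸ Γ := ((x⁻¹ : G) : G ⧸ Γ)

noncomputable def ee (Γ : Subgroup G) : G ⧸ Γ := ((1 : G) : G ⧸ Γ)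

lemma qm_one (Γ : Subgroup G) : qm Γ (1 : G) = ee Γ := by simp [qm, ee]

lemma qm_mul (Γ : Subgroup G) (x g : G) : qm Γ (x * g) = g⁻¹ • qm Γ x := by
  simp only [qm, mul_inv_rev]; rfl

lemma qm_eq_ee_iff (Γ : Subgroup G) (x : G) : qm Γ x = ee Γ ↔ x ∈ Γ := by
  rw [qm, ee, QuotientGroup.eq]; simp

noncomputable def pt {n : ℕ} (w : Fin n → G) (k : ℕ) : G := ((List.ofFn w).take k).prod

lemma pt_top {n : ℕ} (w : Fin n → G) : pt w n = (List.ofFn w).prod := by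
  rw [pt, List.take_of_length_le (by simp)]

omit [Group G] in
lemma ofFn_snoc {n : ℕ} (v : Fin n → G) (g : G) :
    List.ofFn (Fin.snoc v g : Fin (n+1) → G) = List.ofFn v ++ [g] := by
  rw [List.ofFn_succ']
  have h1 : (fun i : Fin n => (Fin.snoc v g : Fin (n+1) → G) i.castSucc) = v := by
    funext i; simp
  rw [h1]; simp [List.concat_eq_append]

lemma pt_snoc_le {n : ℕ} (v : Fin n → G) (g : G) {k : ℕ} (hk : k ≤ n) :
    pt (Fin.snoc v g : Fin (n+1) → G) k = pt v k := by
  rw [pt, pt, ofFn_snoc, List.take_append_of_le_length (by simpa)]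

lemma pt_snoc_top {n : ℕ} (v : Fin n → G) (g : G) :
    pt (Fin.snoc v g : Fin (n+1) → G) (n+1) = pt v n * g := by
  rw [pt_top, ofFn_snoc, List.prod_append, pt_top, List.prod_singleton]

noncomputable def snocEquiv (G : Type*) (n : ℕ) : ((Fin n → G) × G) ≃ (Fin (n+1) → G) where
  toFun p := Fin.snoc p.1 p.2
  invFun w := (fun i => w i.castSucc, w (Fin.last n))
  left_inv p := by ext i <;> simp
  right_inv w := by
    funext i
    refine Fin.lastCases ?_ (fun j => ?_) i <;> simp

variable (ν : G → ℝ≥0∞) (Γ : Subgroup G)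

set_option linter.unusedSectionVars false

/-- weight of a word -/
noncomputable def wt {n : ℕ} (w : Fin n → G) : ℝ≥0∞ := ∏ i, ν (w i)

lemma wt_snoc {n : ℕ} (v : Fin n → G) (g : G) :
    wt ν (Fin.snoc v g : Fin (n+1) → G) = wt ν v * ν g := by
  simp only [wt]
  rw [Fin.prod_univ_castSucc]
  simp

/-- avoiding weight -/
noncomputable def Bf (n : ℕ) (w : Fin n → G) : ℝ≥0∞ :=
  if ∀ k, 1 ≤ k → k ≤ n → qm Γ (pt w k) ≠ ee Γ then wt ν w else 0

noncomputable def WWf (n : ℕ) (c : G ⧸ Γ) (w : Fin n → G) : ℝ≥0∞ :=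
  if (∀ k, 1 ≤ k → k ≤ n → qm Γ (pt w k) ≠ ee Γ) ∧ qm Γ (pt w n) = c then wt ν w else 0

noncomputable def AAf (n : ℕ) (c : G ⧸ Γ) (w : Fin (n+1) → G) : ℝ≥0∞ :=
  if (∀ k, 1 ≤ k → k ≤ n → qm Γ (pt w k) ≠ ee Γ) ∧ qm Γ (pt w (n+1)) = c then wt ν w else 0

noncomputable def PPf (d c : G ⧸ Γ) (g : G) : ℝ≥0∞ := if g⁻¹ • d = c then ν g else 0

noncomputable def PP (d c : G ⧸ Γ) : ℝ≥0∞ := ∑' g : G, PPf ν Γ d c g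

noncomputable def PPs (d c : G ⧸ Γ) : ℝ≥0∞ := if c = ee Γ then 0 else PP ν Γ d c

noncomputable def WW (n : ℕ) (c : G ⧸ Γ) : ℝ≥0∞ := ∑' w : Fin n → G, WWf ν Γ n c w

noncomputable def AA (n : ℕ) (c : G ⧸ Γ) : ℝ≥0∞ := ∑' w : Fin (n+1) → G, AAf ν Γ n c w

lemma WWf_zero (c : G ⧸ Γ) (w : Fin 0 → G) :
    WWf ν Γ 0 c w = if c = ee Γ then 1 else 0 := by
  have h0 : pt w 0 = 1 := by simp [pt]
  have hwt : wt ν w = 1 := by simp [wt]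
  by_cases hc : c = ee Γ
  · rw [if_pos hc, WWf, if_pos, hwt]
    exact ⟨fun k hk hk' => absurd (hk.trans hk') (by omega), by rw [h0, qm_one, hc]⟩
  · rw [if_neg hc, WWf, if_neg]
    rintro ⟨-, h2⟩
    exact hc (by rw [← h2, h0, qm_one])

lemma WW_zero (c : G ⧸ Γ) : WW ν Γ 0 c = if c = ee Γ then 1 else 0 := by
  rw [WW, tsum_eq_single (fun i => i.elim0 : Fin 0 → G)
    (fun b hb => absurd (funext fun i => i.elim0) hb), WWf_zero]

lemma AAf_snoc (n : ℕ) (c : G ⧸ Γ) (v : Fin n → G) (g : G) :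
    AAf ν Γ n c (Fin.snoc v g : Fin (n+1) → G)
      = Bf ν Γ n v * PPf ν Γ (qm Γ (pt v n)) c g := by
  have hceq : (∀ k, 1 ≤ k → k ≤ n → qm Γ (pt (Fin.snoc v g : Fin (n+1) → G) k) ≠ ee Γ) ↔
      (∀ k, 1 ≤ k → k ≤ n → qm Γ (pt v k) ≠ ee Γ) := by
    constructor
    · intro h k hk hk'; rw [← pt_snoc_le v g hk']; exact h k hk hk'
    · intro h k hk hk'; rw [pt_snoc_le v g hk']; exact h k hk hk'
  have htop : qm Γ (pt (Fin.snoc v g : Fin (n+1) → G) (n+1)) = g⁻¹ • qm Γ (pt v n) := by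
    rw [pt_snoc_top, qm_mul]
  by_cases h1 : ∀ k, 1 ≤ k → k ≤ n → qm Γ (pt v k) ≠ ee Γ
  · by_cases h2 : g⁻¹ • qm Γ (pt v n) = c
    · rw [AAf, if_pos ⟨hceq.mpr h1, by rw [htop]; exact h2⟩, Bf, if_pos h1, PPf, if_pos h2,
        wt_snoc]
    · rw [AAf, if_neg (fun h => h2 (by rw [← htop]; exact h.2)), PPf, if_neg h2, mul_zero]
  · rw [AAf, if_neg (fun h => h1 (hceq.mp h.1)), Bf, if_neg h1, zero_mul]

lemma WWf_self (n : ℕ) (v : Fin n → G) : WWf ν Γ n (qm Γ (pt v n)) v = Bf ν Γ n v := by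
  by_cases h1 : ∀ k, 1 ≤ k → k ≤ n → qm Γ (pt v k) ≠ ee Γ
  · rw [WWf, if_pos ⟨h1, rfl⟩, Bf, if_pos h1]
  · rw [WWf, if_neg (fun h => h1 h.1), Bf, if_neg h1]

lemma WWf_ne (n : ℕ) (c : G ⧸ Γ) (v : Fin n → G) (h : c ≠ qm Γ (pt v n)) :
    WWf ν Γ n c v = 0 := by
  rw [WWf, if_neg (fun hh => h hh.2.symm)]

lemma AA_eq (n : ℕ) (c : G ⧸ Γ) :
    AA ν Γ n c = ∑' d : G ⧸ Γ, WW ν Γ n d * PP ν Γ d c := by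
  rw [AA, ← (snocEquiv G n).tsum_eq]
  calc ∑' (p : (Fin n → G) × G), AAf ν Γ n c (snocEquiv G n p)
      = ∑' (p : (Fin n → G) × G), Bf ν Γ n p.1 * PPf ν Γ (qm Γ (pt p.1 n)) c p.2 :=
        tsum_congr fun p => AAf_snoc ν Γ n c p.1 p.2
    _ = ∑' (v : Fin n → G) (g : G), Bf ν Γ n v * PPf ν Γ (qm Γ (pt v n)) c g :=
        ENNReal.tsum_prod (f := fun v g => Bf ν Γ n v * PPf ν Γ (qm Γ (pt v n)) c g)
    _ = ∑' (v : Fin n → G), Bf ν Γ n v * PP ν Γ (qm Γ (pt v n)) c :=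
        tsum_congr fun v => by rw [ENNReal.tsum_mul_left, PP]
    _ = ∑' (v : Fin n → G) (d : G ⧸ Γ), WWf ν Γ n d v * PP ν Γ d c := by
        refine tsum_congr fun v => ?_
        rw [tsum_eq_single (qm Γ (pt v n))
          (fun d hd => by rw [WWf_ne ν Γ n d v hd, zero_mul]), WWf_self]
    _ = ∑' (d : G ⧸ Γ), WW ν Γ n d * PP ν Γ d c := by
        rw [ENNReal.tsum_comm]
        exact tsum_congr fun d => by rw [WW, ENNReal.tsum_mul_right]

lemma WWf_succ (n : ℕ) (c : G ⧸ Γ) (w : Fin (n+1) → G) :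
    WWf ν Γ (n+1) c w = if c = ee Γ then 0 else AAf ν Γ n c w := by
  by_cases hc : c = ee Γ
  · rw [if_pos hc, WWf, if_neg]
    rintro ⟨h1, h2⟩
    exact h1 (n+1) (by omega) le_rfl (h2.trans (by rw [hc]))
  · rw [if_neg hc]
    by_cases hA : (∀ k, 1 ≤ k → k ≤ n → qm Γ (pt w k) ≠ ee Γ) ∧ qm Γ (pt w (n+1)) = c
    · rw [AAf, if_pos hA, WWf, if_pos]
      refine ⟨fun k hk hk' => ?_, hA.2⟩
      rcases Nat.lt_or_ge k (n+1) with h | h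
      · exact hA.1 k hk (by omega)
      · have : k = n + 1 := by omega
        rw [this, hA.2]; exact hc
    · rw [AAf, if_neg hA, WWf, if_neg]
      rintro ⟨h1, h2⟩
      exact hA ⟨fun k hk hk' => h1 k hk (by omega), h2⟩

lemma WW_succ_eq (n : ℕ) (c : G ⧸ Γ) :
    WW ν Γ (n+1) c = if c = ee Γ then 0 else AA ν Γ n c := by
  by_cases hc : c = ee Γ
  · rw [if_pos hc, WW]
    refine (tsum_congr fun w => ?_).trans tsum_zero
    rw [WWf_succ, if_pos hc]
  · rw [if_neg hc, WW, AA]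
    exact tsum_congr fun w => by rw [WWf_succ, if_neg hc]

lemma WW_succ (n : ℕ) (c : G ⧸ Γ) :
    WW ν Γ (n+1) c = ∑' d : G ⧸ Γ, WW ν Γ n d * PPs ν Γ d c := by
  rw [WW_succ_eq]
  by_cases hc : c = ee Γ
  · rw [if_pos hc]
    refine ((tsum_congr fun d => ?_).trans tsum_zero).symm
    rw [PPs, if_pos hc, mul_zero]
  · rw [if_neg hc, AA_eq]
    exact tsum_congr fun d => by rw [PPs, if_neg hc]


lemma tsum_split {ι : Type*} (f g : ι → ℝ≥0∞) (i0 : ι) (hg0 : g i0 = 0)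
    (hg : ∀ i, i ≠ i0 → g i = f i) : ∑' i, f i = f i0 + ∑' i, g i := by
  have h1 : ∀ i, f i = (if i = i0 then f i0 else 0) + g i := by
    intro i
    by_cases h : i = i0
    · rw [if_pos h, h, hg0, add_zero]
    · rw [if_neg h, hg i h, zero_add]
  rw [tsum_congr h1, ENNReal.tsum_add, tsum_ite_eq]

/-- `P(τ > n)` -/
noncomputable def TT (n : ℕ) : ℝ≥0∞ := ∑' c : G ⧸ Γ, WW ν Γ n c

lemma TT_eq_tsum (n : ℕ) : TT ν Γ n = ∑' w : Fin n → G, Bf ν Γ n w := by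
  rw [TT]
  calc ∑' (c : G ⧸ Γ), WW ν Γ n c = ∑' (c : G ⧸ Γ) (w : Fin n → G), WWf ν Γ n c w := rfl
    _ = ∑' (w : Fin n → G) (c : G ⧸ Γ), WWf ν Γ n c w := ENNReal.tsum_comm
    _ = ∑' (w : Fin n → G), Bf ν Γ n w := by
        refine tsum_congr fun w => ?_
        rw [tsum_eq_single (qm Γ (pt w n)) (fun c hc => WWf_ne ν Γ n c w hc), WWf_self]

lemma TT_zero : TT ν Γ 0 = 1 := by
  rw [TT]
  calc ∑' (c : G ⧸ Γ), WW ν Γ 0 c = ∑' (c : G ⧸ Γ), if c = ee Γ then 1 else 0 :=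
        tsum_congr fun c => WW_zero ν Γ c
    _ = 1 := tsum_ite_eq (ee Γ) 1

section hnu
variable (hν : ∑' g, ν g = 1)
include hν

lemma PP_rowsum (d : G ⧸ Γ) : ∑' c : G ⧸ Γ, PP ν Γ d c = 1 := by
  rw [← hν]
  calc ∑' (c : G ⧸ Γ) (g : G), PPf ν Γ d c g = ∑' (g : G) (c : G ⧸ Γ), PPf ν Γ d c g :=
        ENNReal.tsum_comm
    _ = ∑' (g : G), ν g := by
        refine tsum_congr fun g => ?_
        rw [tsum_eq_single (g⁻¹ • d) (fun c hc => by rw [PPf, if_neg (fun h => hc h.symm)]),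
          PPf, if_pos rfl]

lemma PP_colsum (c : G ⧸ Γ) : ∑' d : G ⧸ Γ, PP ν Γ d c = 1 := by
  rw [← hν]
  calc ∑' (d : G ⧸ Γ) (g : G), PPf ν Γ d c g = ∑' (g : G) (d : G ⧸ Γ), PPf ν Γ d c g :=
        ENNReal.tsum_comm
    _ = ∑' (g : G), ν g := by
        refine tsum_congr fun g => ?_
        rw [tsum_eq_single (g • c) ?_, PPf, if_pos (by rw [inv_smul_smul])]
        intro d hd
        rw [PPf, if_neg]
        intro h
        exact hd (by rw [← h, smul_inv_smul])

lemma TT_succ (n : ℕ) : TT ν Γ n = AA ν Γ n (ee Γ) + TT ν Γ (n+1) := by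
  have h1 : TT ν Γ n = ∑' c : G ⧸ Γ, AA ν Γ n c := by
    calc TT ν Γ n = ∑' d : G ⧸ Γ, WW ν Γ n d * 1 := by
          rw [TT]; exact tsum_congr fun d => (mul_one _).symm
      _ = ∑' d : G ⧸ Γ, WW ν Γ n d * ∑' c : G ⧸ Γ, PP ν Γ d c := by
          exact tsum_congr fun d => by rw [PP_rowsum ν Γ hν d]
      _ = ∑' (d : G ⧸ Γ) (c : G ⧸ Γ), WW ν Γ n d * PP ν Γ d c :=
          tsum_congr fun d => ENNReal.tsum_mul_left.symm
      _ = ∑' (c : G ⧸ Γ) (d : G ⧸ Γ), WW ν Γ n d * PP ν Γ d c := ENNReal.tsum_comm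
      _ = ∑' c : G ⧸ Γ, AA ν Γ n c := tsum_congr fun c => (AA_eq ν Γ n c).symm
  have h2 : ∑' c : G ⧸ Γ, AA ν Γ n c
      = AA ν Γ n (ee Γ) + ∑' c : G ⧸ Γ, if c = ee Γ then 0 else AA ν Γ n c :=
    tsum_split (fun c => AA ν Γ n c) (fun c => if c = ee Γ then 0 else AA ν Γ n c) (ee Γ)
      (if_pos rfl) (fun c hc => if_neg hc)
  have h3 : TT ν Γ (n+1) = ∑' c : G ⧸ Γ, if c = ee Γ then 0 else AA ν Γ n c := by
    rw [TT]
    exact tsum_congr fun c => WW_succ_eq ν Γ n c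
  rw [h1, h2, ← h3]

end hnu

/-- `n`-step taboo kernel, as iterated kernel. -/
noncomputable def Ms : ℕ → (G ⧸ Γ) → (G ⧸ Γ) → ℝ≥0∞
  | 0, d, c => if c = d then 1 else 0
  | (n+1), d, c => ∑' d' : G ⧸ Γ, Ms n d d' * PPs ν Γ d' c

lemma WW_eq_Ms (n : ℕ) (c : G ⧸ Γ) : WW ν Γ n c = Ms ν Γ n (ee Γ) c := by
  induction n generalizing c with
  | zero => rw [WW_zero, Ms]
  | succ n ih =>
    rw [WW_succ, Ms]
    exact tsum_congr fun d => by rw [ih d]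

lemma Ms_one (d c : G ⧸ Γ) : Ms ν Γ 1 d c = PPs ν Γ d c := by
  rw [Ms]
  rw [tsum_eq_single d (fun d' hd' => by rw [Ms, if_neg hd', zero_mul]), Ms, if_pos rfl,
    one_mul]

lemma Ms_add (n m : ℕ) (d c : G ⧸ Γ) :
    Ms ν Γ (n + m) d c = ∑' d' : G ⧸ Γ, Ms ν Γ n d d' * Ms ν Γ m d' c := by
  induction m generalizing c with
  | zero =>
    rw [Nat.add_zero, tsum_eq_single c ?_, Ms, if_pos rfl, mul_one]
    intro d' hd'
    rw [Ms, if_neg (fun h => hd' h.symm), mul_zero]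
  | succ m ih =>
    show Ms ν Γ ((n + m) + 1) d c = _
    rw [Ms]
    calc ∑' d₁ : G ⧸ Γ, Ms ν Γ (n+m) d d₁ * PPs ν Γ d₁ c
        = ∑' (d₁ : G ⧸ Γ) (d' : G ⧸ Γ), Ms ν Γ n d d' * Ms ν Γ m d' d₁ * PPs ν Γ d₁ c := by
          exact tsum_congr fun d₁ => by rw [ih d₁, ENNReal.tsum_mul_right]
      _ = ∑' (d' : G ⧸ Γ) (d₁ : G ⧸ Γ), Ms ν Γ n d d' * (Ms ν Γ m d' d₁ * PPs ν Γ d₁ c) := by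
          rw [ENNReal.tsum_comm]
          exact tsum_congr fun d' => tsum_congr fun d₁ => by ring
      _ = ∑' d' : G ⧸ Γ, Ms ν Γ n d d' * Ms ν Γ (m+1) d' c := by
          refine tsum_congr fun d' => ?_
          rw [ENNReal.tsum_mul_left]
          congr 1

/-- row sums of the taboo kernel: survival probability. -/
noncomputable def ss (n : ℕ) (d : G ⧸ Γ) : ℝ≥0∞ := ∑' c : G ⧸ Γ, Ms ν Γ n d c

lemma ss_zero (d : G ⧸ Γ) : ss ν Γ 0 d = 1 := by
  rw [ss]
  exact (tsum_congr fun c => by rw [Ms]; rfl).trans (tsum_ite_eq d 1)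

lemma TT_eq_ss (n : ℕ) : TT ν Γ n = ss ν Γ n (ee Γ) := by
  rw [TT, ss]
  exact tsum_congr fun c => WW_eq_Ms ν Γ n c

lemma ss_add (n m : ℕ) (d : G ⧸ Γ) :
    ss ν Γ (n + m) d = ∑' d' : G ⧸ Γ, Ms ν Γ n d d' * ss ν Γ m d' := by
  rw [ss]
  calc ∑' c : G ⧸ Γ, Ms ν Γ (n+m) d c
      = ∑' (c : G ⧸ Γ) (d' : G ⧸ Γ), Ms ν Γ n d d' * Ms ν Γ m d' c :=
        tsum_congr fun c => Ms_add ν Γ n m d c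
    _ = ∑' (d' : G ⧸ Γ) (c : G ⧸ Γ), Ms ν Γ n d d' * Ms ν Γ m d' c := ENNReal.tsum_comm
    _ = ∑' d' : G ⧸ Γ, Ms ν Γ n d d' * ss ν Γ m d' :=
        tsum_congr fun d' => by rw [ENNReal.tsum_mul_left, ss]

lemma ss_le_mul (n m : ℕ) (d : G ⧸ Γ) (b : ℝ≥0∞) (hb : ∀ d', ss ν Γ m d' ≤ b) :
    ss ν Γ (n + m) d ≤ ss ν Γ n d * b := by
  rw [ss_add]
  calc ∑' d' : G ⧸ Γ, Ms ν Γ n d d' * ss ν Γ m d'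
      ≤ ∑' d' : G ⧸ Γ, Ms ν Γ n d d' * b :=
        Summable.tsum_le_tsum (fun d' => mul_le_mul_right (hb d') _) ENNReal.summable ENNReal.summable
    _ = ss ν Γ n d * b := by rw [ENNReal.tsum_mul_right, ss]

section hnu2
variable (hν : ∑' g, ν g = 1)
include hν

lemma ss_one_le (d : G ⧸ Γ) : ss ν Γ 1 d ≤ 1 := by
  rw [ss]
  calc ∑' c : G ⧸ Γ, Ms ν Γ 1 d c = ∑' c : G ⧸ Γ, PPs ν Γ d c :=
        tsum_congr fun c => Ms_one ν Γ d c
    _ ≤ ∑' c : G ⧸ Γ, PP ν Γ d c := by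
        refine Summable.tsum_le_tsum (fun c => ?_) ENNReal.summable ENNReal.summable
        rw [PPs]
        split_ifs with h
        · exact zero_le
        · exact le_rfl
    _ = 1 := PP_rowsum ν Γ hν d

lemma ss_le_one (n : ℕ) (d : G ⧸ Γ) : ss ν Γ n d ≤ 1 := by
  induction n generalizing d with
  | zero => rw [ss_zero]
  | succ n ih =>
    have h := ss_le_mul ν Γ n 1 d 1 (fun d' => ss_one_le ν Γ hν d')
    rw [mul_one] at h
    exact h.trans (ih d)
    
lemma ss_antitone {n m : ℕ} (h : n ≤ m) (d : G ⧸ Γ) : ss ν Γ m d ≤ ss ν Γ n d := by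
  obtain ⟨k, rfl⟩ := Nat.exists_eq_add_of_le h
  calc ss ν Γ (n + k) d ≤ ss ν Γ n d * 1 := ss_le_mul ν Γ n k d 1 (fun d' => ss_le_one ν Γ hν k d')
    _ = ss ν Γ n d := mul_one _

end hnu2

/-- key strict inequality for substochastic averages -/
lemma strictSum {ι : Type*} (a b : ι → ℝ≥0∞) (M : ℝ≥0∞) (i0 : ι)
    (ha : ∑' i, a i = 1) (hb : ∀ i, b i ≤ M) (hM : M ≠ ⊤) (ha0 : a i0 ≠ 0) (hb0 : b i0 < M) :
    ∑' i, a i * b i < M := by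
  have hai : a i0 ≤ 1 := ha ▸ ENNReal.le_tsum i0
  have hsplit : ∑' i, a i * b i
      = a i0 * b i0 + ∑' i, if i = i0 then 0 else a i * b i :=
    tsum_split (fun i => a i * b i) (fun i => if i = i0 then 0 else a i * b i) i0
      (if_pos rfl) (fun i hi => if_neg hi)
  have hrest : (∑' i, if i = i0 then 0 else a i) = 1 - a i0 := by
    refine ENNReal.eq_sub_of_add_eq (hai.trans_lt (by norm_num)).ne ?_
    rw [add_comm]
    exact (tsum_split (fun i => a i) (fun i => if i = i0 then 0 else a i) i0
      (if_pos rfl) (fun i hi => if_neg hi)).symm.trans ha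
  have hb1 : (∑' i, if i = i0 then 0 else a i * b i) ≤ (1 - a i0) * M := by
    rw [← hrest, ← ENNReal.tsum_mul_right]
    refine Summable.tsum_le_tsum (fun i => ?_) ENNReal.summable ENNReal.summable
    split_ifs with h
    · simp
    · exact mul_le_mul_right (hb i) _
  rw [hsplit]
  have hfin : (1 - a i0) * M ≠ ⊤ := ENNReal.mul_ne_top (by simp) hM
  calc a i0 * b i0 + ∑' i, (if i = i0 then 0 else a i * b i)
      ≤ a i0 * b i0 + (1 - a i0) * M := add_le_add_right hb1 _
    _ < a i0 * M + (1 - a i0) * M := by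
        exact ENNReal.add_lt_add_right hfin
          (ENNReal.mul_lt_mul_right ha0 (hai.trans_lt (by norm_num)).ne hb0)
    _ = (a i0 + (1 - a i0)) * M := (add_mul _ _ _).symm
    _ = M := by rw [add_tsub_cancel_of_le hai, one_mul]

lemma PP_ge (d : G ⧸ Γ) (g : G) : ν g ≤ PP ν Γ d (g⁻¹ • d) := by
  have h : PPf ν Γ d (g⁻¹ • d) g = ν g := by rw [PPf, if_pos rfl]
  exact h ▸ ENNReal.le_tsum g

lemma propagate (S : Set (G ⧸ Γ)) (hS : ∀ c ∈ S, ∀ d, PP ν Γ d c ≠ 0 → d ∈ S) :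
    ∀ l : List G, (∀ x ∈ l, ν x ≠ 0) → ∀ d : G ⧸ Γ, l.prod⁻¹ • d ∈ S → d ∈ S := by
  intro l
  induction l with
  | nil => intro _ d hd; simpa using hd
  | cons g t ih =>
    intro hpos d hd
    have hgd : t.prod⁻¹ • (g⁻¹ • d) ∈ S := by
      rw [← mul_smul, ← mul_inv_rev, ← List.prod_cons]
      exact hd
    have h1 : g⁻¹ • d ∈ S := ih (fun x hx => hpos x (List.mem_cons_of_mem g hx)) _ hgd
    refine hS _ h1 d (fun h0 => ?_)
    have := PP_ge ν Γ d g
    rw [h0] at this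
    exact hpos g (List.mem_cons_self) (le_zero_iff.mp this)

section decay
variable (hν : ∑' g, ν g = 1)
include hν

lemma exists_lt_one :
    ∀ l : List G, (∀ x ∈ l, ν x ≠ 0) → l ≠ [] → ∀ d : G ⧸ Γ, l.prod⁻¹ • d = ee Γ →
      ∃ k, 1 ≤ k ∧ k ≤ l.length ∧ ss ν Γ k d < 1 := by
  intro l
  induction l with
  | nil => intro _ h; exact absurd rfl h
  | cons g t ih =>
    intro hpos _ d hd
    have hνg : ν g ≠ 0 := hpos g (List.mem_cons_self)
    by_cases hd' : g⁻¹ • d = ee Γ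
    · refine ⟨1, le_rfl, by simp, ?_⟩
      have hform : ss ν Γ 1 d
          = ∑' c : G ⧸ Γ, PP ν Γ d c * (if c = ee Γ then 0 else 1) := by
        rw [ss]
        refine tsum_congr fun c => ?_
        rw [Ms_one, PPs]
        by_cases hc : c = ee Γ
        · rw [if_pos hc, if_pos hc, mul_zero]
        · rw [if_neg hc, if_neg hc, mul_one]
      rw [hform]
      refine strictSum _ _ 1 (ee Γ) (PP_rowsum ν Γ hν d) (fun c => ?_) ENNReal.one_ne_top ?_ ?_
      · split_ifs <;> simp
      · rw [← hd']
        intro h0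
        have := PP_ge ν Γ d g
        rw [h0] at this
        exact hνg (le_zero_iff.mp this)
      · rw [if_pos rfl]; norm_num
    · have htne : t ≠ [] := by
        rintro rfl
        exact hd' (by simpa using hd)
      have hdt : t.prod⁻¹ • (g⁻¹ • d) = ee Γ := by
        rw [← mul_smul, ← mul_inv_rev, ← List.prod_cons]
        exact hd
      obtain ⟨k, hk1, hk2, hk3⟩ :=
        ih (fun x hx => hpos x (List.mem_cons_of_mem g hx)) htne (g⁻¹ • d) hdt
      refine ⟨k + 1, by omega, by simp [List.length_cons]; omega, ?_⟩
      have hform : ss ν Γ (1 + k) d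
          = ∑' c : G ⧸ Γ, PP ν Γ d c * (if c = ee Γ then 0 else ss ν Γ k c) := by
        rw [ss_add]
        refine tsum_congr fun c => ?_
        rw [Ms_one, PPs]
        by_cases hc : c = ee Γ
        · rw [if_pos hc, if_pos hc, mul_zero, zero_mul]
        · rw [if_neg hc, if_neg hc]
      rw [add_comm k 1, hform]
      refine strictSum _ _ 1 (g⁻¹ • d) (PP_rowsum ν Γ hν d) (fun c => ?_) ENNReal.one_ne_top ?_ ?_
      · split_ifs with h
        · simp
        · exact ss_le_one ν Γ hν k c
      · intro h0
        have := PP_ge ν Γ d g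
        rw [h0] at this
        exact hνg (le_zero_iff.mp this)
      · rw [if_neg hd']
        exact hk3

lemma exists_decay [Finite (G ⧸ Γ)]
    (hgl : ∀ g : G, ∃ l : List G, l ≠ [] ∧ (∀ x ∈ l, ν x ≠ 0) ∧ l.prod = g) :
    ∃ K : ℕ, 1 ≤ K ∧ ∃ ρ : ℝ≥0∞, ρ < 1 ∧ ∀ d, ss ν Γ K d ≤ ρ := by
  have hk : ∀ d : G ⧸ Γ, ∃ k, 1 ≤ k ∧ ss ν Γ k d < 1 := by
    intro d
    obtain ⟨z, rfl⟩ := QuotientGroup.mk_surjective d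
    obtain ⟨l, hne, hpos, hprod⟩ := hgl z
    have hend : l.prod⁻¹ • ((z : G) : G ⧸ Γ) = ee Γ := by
      rw [hprod]
      show ((z⁻¹ * z : G) : G ⧸ Γ) = ee Γ
      rw [inv_mul_cancel]; rfl
    obtain ⟨k, h1, _, h3⟩ := exists_lt_one ν Γ hν l hpos hne _ hend
    exact ⟨k, h1, h3⟩
  haveI := Fintype.ofFinite (G ⧸ Γ)
  choose k hk1 hk2 using hk
  set K := Finset.univ.sup k with hK
  have hKk : ∀ d, k d ≤ K := fun d => Finset.le_sup (Finset.mem_univ d)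
  have hK1 : 1 ≤ K := le_trans (hk1 (ee Γ)) (hKk (ee Γ))
  have hssK : ∀ d, ss ν Γ K d < 1 :=
    fun d => lt_of_le_of_lt (ss_antitone ν Γ hν (hKk d) d) (hk2 d)
  refine ⟨K, hK1, Finset.univ.sup (fun d => ss ν Γ K d), ?_,
    fun d => Finset.le_sup (Finset.mem_univ d)⟩
  rw [Finset.sup_lt_iff (by norm_num : (⊥ : ℝ≥0∞) < 1)]
  exact fun d _ => hssK d

lemma ss_pow {K : ℕ} {ρ : ℝ≥0∞} (hρ : ∀ d, ss ν Γ K d ≤ ρ) (j : ℕ) (d : G ⧸ Γ) :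
    ss ν Γ (j * K) d ≤ ρ ^ j := by
  induction j generalizing d with
  | zero => rw [Nat.zero_mul, ss_zero, pow_zero]
  | succ j ih =>
    rw [Nat.succ_mul, pow_succ]
    exact le_trans (ss_le_mul ν Γ (j*K) K d ρ hρ)
      (mul_le_mul_left (ih d) ρ)

lemma TT_le_pow {K : ℕ} {ρ : ℝ≥0∞} (hK : 1 ≤ K) (hρ : ∀ d, ss ν Γ K d ≤ ρ) (n : ℕ) :
    TT ν Γ n ≤ ρ ^ (n / K) := by
  rw [TT_eq_ss]
  refine le_trans (ss_antitone ν Γ hν (Nat.div_mul_le_self n K) _) ?_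
  exact ss_pow ν Γ hν hρ (n / K) (ee Γ)

lemma sum_TT_ne_top {K : ℕ} {ρ : ℝ≥0∞} (hK : 1 ≤ K) (hρ1 : ρ < 1)
    (hρ : ∀ d, ss ν Γ K d ≤ ρ) : ∑' n, TT ν Γ n ≠ ⊤ := by
  haveI : NeZero K := ⟨by omega⟩
  have hle : ∑' n, TT ν Γ n ≤ ∑' n : ℕ, ρ ^ (n / K) :=
    Summable.tsum_le_tsum (TT_le_pow ν Γ hν hK hρ) ENNReal.summable ENNReal.summable
  have hcomp : ∑' n : ℕ, ρ ^ (n / K) = (K : ℝ≥0∞) * (1 - ρ)⁻¹ := by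
    rw [← (Nat.divModEquiv K).symm.tsum_eq (f := fun n : ℕ => ρ ^ (n / K))]
    have hpt : ∀ p : ℕ × Fin K, ρ ^ ((((Nat.divModEquiv K).symm p) : ℕ) / K) = ρ ^ p.1 := by
      intro p
      congr 1
      have : (((Nat.divModEquiv K).symm p) : ℕ) = p.1 * K + (p.2 : ℕ) := by
        simp [Nat.divModEquiv]
      rw [this, Nat.mul_comm, Nat.mul_add_div (by omega), Nat.div_eq_of_lt p.2.isLt, add_zero]
    rw [tsum_congr hpt, ENNReal.tsum_prod (f := fun (j : ℕ) (_ : Fin K) => ρ ^ j)]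
    have hin : ∀ j : ℕ, ∑' _ : Fin K, ρ ^ j = (K : ℝ≥0∞) * ρ ^ j := by
      intro j
      rw [tsum_fintype]
      simp [Finset.sum_const, nsmul_eq_mul]
    rw [tsum_congr hin, ENNReal.tsum_mul_left, ENNReal.tsum_geometric]
  refine ne_top_of_le_ne_top ?_ (hle.trans hcomp.le)
  exact ENNReal.mul_ne_top (ENNReal.natCast_ne_top K)
    (ENNReal.inv_ne_top.mpr (tsub_pos_of_lt hρ1).ne')

lemma TT_tendsto {K : ℕ} {ρ : ℝ≥0∞} (hK : 1 ≤ K) (hρ1 : ρ < 1)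
    (hρ : ∀ d, ss ν Γ K d ≤ ρ) :
    Filter.Tendsto (TT ν Γ) Filter.atTop (nhds 0) := by
  have hdiv : Filter.Tendsto (fun n : ℕ => n / K) Filter.atTop Filter.atTop := by
    refine Filter.tendsto_atTop_atTop.2 (fun b => ⟨b * K, fun n hn => ?_⟩)
    exact (Nat.le_div_iff_mul_le (by omega)).2 hn
  have hpow : Filter.Tendsto (fun n : ℕ => ρ ^ (n / K)) Filter.atTop (nhds 0) :=
    (ENNReal.tendsto_pow_atTop_nhds_zero_of_lt_one hρ1).comp hdiv
  exact tendsto_of_tendsto_of_tendsto_of_le_of_le tendsto_const_nhds hpow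
    (fun n => zero_le) (TT_le_pow ν Γ hν hK hρ)

lemma TT_antitone : Antitone (TT ν Γ) := by
  refine antitone_nat_of_succ_le (fun n => ?_)
  rw [TT_succ ν Γ hν n]
  exact le_add_self

lemma sum_AA_eq_one (htend : Filter.Tendsto (TT ν Γ) Filter.atTop (nhds 0)) :
    ∑' n, AA ν Γ n (ee Γ) = 1 := by
  have hpart : ∀ N, (∑ n ∈ Finset.range N, AA ν Γ n (ee Γ)) + TT ν Γ N = 1 := by
    intro N
    induction N with
    | zero => simp [TT_zero]
    | succ N ih =>
      rw [Finset.sum_range_succ, add_assoc, ← TT_succ ν Γ hν N, ih]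
  have hinf : ⨅ n, TT ν Γ n = 0 :=
    tendsto_nhds_unique (tendsto_atTop_iInf (TT_antitone ν Γ hν)) htend
  refine le_antisymm ?_ ?_
  · rw [ENNReal.tsum_eq_iSup_nat]
    exact iSup_le fun N => (hpart N) ▸ le_self_add
  · have h1 : ∀ N, (1 : ℝ≥0∞) ≤ ∑' n, AA ν Γ n (ee Γ) + TT ν Γ N := by
      intro N
      rw [← hpart N]
      exact add_le_add_left (ENNReal.sum_le_tsum _) _
    calc (1 : ℝ≥0∞) ≤ ⨅ N, (∑' n, AA ν Γ n (ee Γ) + TT ν Γ N) := le_iInf h1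
      _ = ∑' n, AA ν Γ n (ee Γ) + ⨅ N, TT ν Γ N := ENNReal.add_iInf.symm
      _ = ∑' n, AA ν Γ n (ee Γ) := by rw [hinf, add_zero]

end decay

/-- expected number of visits to `c` strictly before the return time -/
noncomputable def VV (c : G ⧸ Γ) : ℝ≥0∞ := ∑' n, WW ν Γ n c

lemma VV_ee : VV ν Γ (ee Γ) = 1 := by
  rw [VV, tsum_eq_single 0 ?_]
  · rw [WW_zero, if_pos rfl]
  · intro n hn
    cases n with
    | zero => exact absurd rfl hn
    | succ m => rw [WW_succ_eq, if_pos rfl]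

lemma sum_VV : ∑' c : G ⧸ Γ, VV ν Γ c = ∑' n, TT ν Γ n := by
  simp only [VV]
  rw [ENNReal.tsum_comm (f := fun c (n : ℕ) => WW ν Γ n c)]
  rfl

lemma VV_rec (c : G ⧸ Γ) (hc : c ≠ ee Γ) :
    VV ν Γ c = ∑' d : G ⧸ Γ, VV ν Γ d * PP ν Γ d c := by
  rw [VV, tsum_eq_zero_add' ENNReal.summable, WW_zero, if_neg hc, zero_add]
  calc ∑' n, WW ν Γ (n+1) c = ∑' (n : ℕ) (d : G ⧸ Γ), WW ν Γ n d * PPs ν Γ d c :=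
        tsum_congr fun n => WW_succ ν Γ n c
    _ = ∑' (d : G ⧸ Γ) (n : ℕ), WW ν Γ n d * PPs ν Γ d c := ENNReal.tsum_comm
    _ = ∑' d : G ⧸ Γ, VV ν Γ d * PPs ν Γ d c :=
        tsum_congr fun d => by rw [ENNReal.tsum_mul_right, VV]
    _ = ∑' d : G ⧸ Γ, VV ν Γ d * PP ν Γ d c :=
        tsum_congr fun d => by rw [PPs, if_neg hc]

lemma VV_invariant (hν : ∑' g, ν g = 1) (hfin : ∑' n, TT ν Γ n ≠ ⊤) (c : G ⧸ Γ) :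
    VV ν Γ c = ∑' d : G ⧸ Γ, VV ν Γ d * PP ν Γ d c := by
  by_cases hc : c = ee Γ
  · subst hc
    have htot : ∑' c : G ⧸ Γ, VV ν Γ c
        = ∑' c : G ⧸ Γ, ∑' d : G ⧸ Γ, VV ν Γ d * PP ν Γ d c := by
      calc ∑' c : G ⧸ Γ, VV ν Γ c = ∑' d : G ⧸ Γ, VV ν Γ d * 1 :=
            tsum_congr fun d => (mul_one _).symm
        _ = ∑' d : G ⧸ Γ, VV ν Γ d * ∑' c : G ⧸ Γ, PP ν Γ d c :=
            tsum_congr fun d => by rw [PP_rowsum ν Γ hν d]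
        _ = ∑' (d : G ⧸ Γ) (c : G ⧸ Γ), VV ν Γ d * PP ν Γ d c :=
            tsum_congr fun d => ENNReal.tsum_mul_left.symm
        _ = ∑' (c : G ⧸ Γ) (d : G ⧸ Γ), VV ν Γ d * PP ν Γ d c := ENNReal.tsum_comm
    have hsplitL : ∑' c : G ⧸ Γ, VV ν Γ c
        = VV ν Γ (ee Γ) + ∑' c : G ⧸ Γ, (if c = ee Γ then 0 else VV ν Γ c) :=
      tsum_split _ _ (ee Γ) (if_pos rfl) (fun c hc => if_neg hc)
    have hsplitR : ∑' c : G ⧸ Γ, ∑' d : G ⧸ Γ, VV ν Γ d * PP ν Γ d c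
        = (∑' d : G ⧸ Γ, VV ν Γ d * PP ν Γ d (ee Γ))
          + ∑' c : G ⧸ Γ, (if c = ee Γ then 0 else ∑' d : G ⧸ Γ, VV ν Γ d * PP ν Γ d c) :=
      tsum_split _ _ (ee Γ) (if_pos rfl) (fun c hc => if_neg hc)
    have hsame : (∑' c : G ⧸ Γ, (if c = ee Γ then 0 else VV ν Γ c))
        = ∑' c : G ⧸ Γ, (if c = ee Γ then 0 else ∑' d : G ⧸ Γ, VV ν Γ d * PP ν Γ d c) := by
      refine tsum_congr fun c => ?_
      by_cases hc : c = ee Γ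
      · rw [if_pos hc, if_pos hc]
      · rw [if_neg hc, if_neg hc, VV_rec ν Γ c hc]
    have hfin2 : (∑' c : G ⧸ Γ, (if c = ee Γ then 0 else VV ν Γ c)) ≠ ⊤ := by
      refine ne_top_of_le_ne_top (sum_VV ν Γ ▸ hfin) ?_
      refine Summable.tsum_le_tsum (fun c => ?_) ENNReal.summable ENNReal.summable
      split_ifs
      · exact zero_le
      · exact le_rfl
    have hsplitL' : ∑' c : G ⧸ Γ, VV ν Γ c
        = VV ν Γ (ee Γ)
          + ∑' c : G ⧸ Γ, (if c = ee Γ then 0 else ∑' d : G ⧸ Γ, VV ν Γ d * PP ν Γ d c) := by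
      rw [hsplitL, hsame]
    have hfin2' : (∑' c : G ⧸ Γ,
        (if c = ee Γ then 0 else ∑' d : G ⧸ Γ, VV ν Γ d * PP ν Γ d c)) ≠ ⊤ := by
      rw [← hsame]; exact hfin2
    have hkey := hsplitL'.symm.trans (htot.trans hsplitR)
    rw [add_comm (VV ν Γ (ee Γ)), add_comm (∑' d : G ⧸ Γ, VV ν Γ d * PP ν Γ d (ee Γ))] at hkey
    exact (ENNReal.add_right_inj hfin2').mp hkey
  · exact VV_rec ν Γ c hc

lemma VV_const [Finite (G ⧸ Γ)] (hν : ∑' g, ν g = 1)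
    (hgl : ∀ g : G, ∃ l : List G, l ≠ [] ∧ (∀ x ∈ l, ν x ≠ 0) ∧ l.prod = g)
    (hfin : ∑' n, TT ν Γ n ≠ ⊤) : ∀ c, VV ν Γ c = 1 := by
  haveI : Nonempty (G ⧸ Γ) := ⟨ee Γ⟩
  have hVfin : ∀ c, VV ν Γ c ≠ ⊤ :=
    fun c => ne_top_of_le_ne_top (sum_VV ν Γ ▸ hfin) (ENNReal.le_tsum c)
  obtain ⟨c0, hc0⟩ := Finite.exists_max (VV ν Γ)
  have hS : ∀ c, VV ν Γ c = VV ν Γ c0 → ∀ d, PP ν Γ d c ≠ 0 → VV ν Γ d = VV ν Γ c0 := by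
    intro c hc d hd
    by_contra hne
    have hlt : VV ν Γ d < VV ν Γ c0 := lt_of_le_of_ne (hc0 d) hne
    have hstrict : ∑' d' : G ⧸ Γ, VV ν Γ d' * PP ν Γ d' c < VV ν Γ c0 := by
      have h := strictSum (fun d' => PP ν Γ d' c) (fun d' => VV ν Γ d') (VV ν Γ c0) d
        (PP_colsum ν Γ hν c) hc0 (hVfin c0) hd hlt
      calc ∑' d' : G ⧸ Γ, VV ν Γ d' * PP ν Γ d' c
          = ∑' d' : G ⧸ Γ, PP ν Γ d' c * VV ν Γ d' := tsum_congr fun d' => mul_comm _ _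
        _ < VV ν Γ c0 := h
    rw [← VV_invariant ν Γ hν hfin c, hc] at hstrict
    exact lt_irrefl _ hstrict
  have hall : ∀ d, VV ν Γ d = VV ν Γ c0 := by
    intro d
    obtain ⟨z, rfl⟩ := QuotientGroup.mk_surjective d
    obtain ⟨z0, rfl⟩ := QuotientGroup.mk_surjective c0
    obtain ⟨l, hlne, hlpos, hlprod⟩ := hgl (z * z0⁻¹)
    have hzz : (z * z0⁻¹)⁻¹ * z = z0 := by group
    have hstep : l.prod⁻¹ • ((z : G) : G ⧸ Γ) = ((z0 : G) : G ⧸ Γ) := by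
      rw [hlprod]
      show (((z * z0⁻¹)⁻¹ * z : G) : G ⧸ Γ) = _
      rw [hzz]
    refine propagate ν Γ {c | VV ν Γ c = VV ν Γ ((z0 : G) : G ⧸ Γ)}
      (fun c hc d' hd' => hS c hc d' hd') l hlpos _ ?_
    rw [hstep]
    exact rfl
  intro c
  exact (hall c).trans ((hall (ee Γ)).symm.trans (VV_ee ν Γ))

lemma sum_TT_eq [Finite (G ⧸ Γ)] (hν : ∑' g, ν g = 1)
    (hgl : ∀ g : G, ∃ l : List G, l ≠ [] ∧ (∀ x ∈ l, ν x ≠ 0) ∧ l.prod = g)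
    (hfin : ∑' n, TT ν Γ n ≠ ⊤) :
    ∑' n, TT ν Γ n = (Nat.card (G ⧸ Γ) : ℝ≥0∞) := by
  haveI := Fintype.ofFinite (G ⧸ Γ)
  rw [← sum_VV ν Γ, tsum_congr (VV_const ν Γ hν hgl hfin), tsum_fintype]
  simp [Nat.card_eq_fintype_card]

lemma TT_le_one (hν : ∑' g, ν g = 1) (n : ℕ) : TT ν Γ n ≤ 1 := by
  rw [TT_eq_ss]
  exact ss_le_one ν Γ hν n (ee Γ)

section bridge

variable (μ : G → ℝ)

noncomputable def SHEf (n : ℕ) (γ : G) (w : Fin (n+1) → G) : ℝ≥0∞ :=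
  if (∀ k, 1 ≤ k → k < n+1 → (1:G) * ((List.ofFn w).take k).prod ∉ Γ) ∧
      (1:G) * (List.ofFn w).prod = γ
  then wt ν w else 0

noncomputable def SHE (n : ℕ) (γ : G) : ℝ≥0∞ := ∑' w : Fin (n+1) → G, SHEf ν Γ n γ w

lemma wt_ofReal_ne_top {n : ℕ} (w : Fin n → G) :
    wt (fun g => ENNReal.ofReal (μ g)) w ≠ ⊤ := by
  rw [wt]
  exact (ENNReal.prod_lt_top (fun i _ => ENNReal.ofReal_lt_top)).ne

lemma wt_ofReal_toReal (hpos : ∀ g, 0 ≤ μ g) {n : ℕ} (w : Fin n → G) :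
    (wt (fun g => ENNReal.ofReal (μ g)) w).toReal = ∏ i, μ (w i) := by
  rw [wt, ENNReal.toReal_prod]
  exact Finset.prod_congr rfl (fun i _ => ENNReal.toReal_ofReal (hpos _))

lemma SHEf_ofReal_ne_top (n : ℕ) (γ : G) (w : Fin (n+1) → G) :
    SHEf (fun g => ENNReal.ofReal (μ g)) Γ n γ w ≠ ⊤ := by
  rw [SHEf]
  split_ifs
  · exact wt_ofReal_ne_top μ w
  · exact ENNReal.zero_ne_top

lemma Bf_ofReal_ne_top (n : ℕ) (w : Fin n → G) :
    Bf (fun g => ENNReal.ofReal (μ g)) Γ n w ≠ ⊤ := by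
  rw [Bf]
  split_ifs
  · exact wt_ofReal_ne_top μ w
  · exact ENNReal.zero_ne_top

lemma tailProb_eq (hpos : ∀ g, 0 ≤ μ g) (n : ℕ) :
    tailProb μ Γ n = (TT (fun g => ENNReal.ofReal (μ g)) Γ n).toReal := by
  rw [TT_eq_tsum, ENNReal.tsum_toReal_eq (fun w => Bf_ofReal_ne_top Γ μ n w), tailProb]
  refine tsum_congr fun w => ?_
  have hcond : (∀ k, 1 ≤ k → k ≤ n → ((List.ofFn w).take k).prod ∉ Γ) ↔
      (∀ k, 1 ≤ k → k ≤ n →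
        qm Γ (pt w k) ≠ ee Γ) := by
    constructor
    · intro h k hk hk' he
      exact h k hk hk' ((qm_eq_ee_iff Γ _).mp he)
    · intro h k hk hk' hm
      exact h k hk hk' ((qm_eq_ee_iff Γ _).mpr hm)
  by_cases h : ∀ k, 1 ≤ k → k ≤ n → ((List.ofFn w).take k).prod ∉ Γ
  · rw [if_pos h, Bf, if_pos (hcond.mp h), wt_ofReal_toReal μ hpos]
  · rw [if_neg h, Bf, if_neg (fun hh => h (hcond.mpr hh)), ENNReal.toReal_zero]

lemma stepHit_eq (hpos : ∀ g, 0 ≤ μ g) (n : ℕ) (γ : G) :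
    stepHit μ Γ 1 (n+1) γ = (SHE (fun g => ENNReal.ofReal (μ g)) Γ n γ).toReal := by
  rw [SHE, ENNReal.tsum_toReal_eq (fun w => SHEf_ofReal_ne_top Γ μ n γ w), stepHit]
  refine tsum_congr fun w => ?_
  by_cases h : (∀ k, 1 ≤ k → k < n+1 → (1:G) * ((List.ofFn w).take k).prod ∉ Γ) ∧
      (1:G) * (List.ofFn w).prod = γ
  · rw [if_pos h, SHEf, if_pos h, wt_ofReal_toReal μ hpos]
  · rw [if_neg h, SHEf, if_neg h, ENNReal.toReal_zero]

lemma SHE_gamma (n : ℕ) :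
    ∑' γ : Γ, SHE ν Γ n (↑γ) = AA ν Γ n (ee Γ) := by
  rw [AA]
  simp only [SHE]
  rw [ENNReal.tsum_comm (f := fun (γ : Γ) (w : Fin (n+1) → G) => SHEf ν Γ n (↑γ) w)]
  refine tsum_congr fun w => ?_
  have hiffk : (∀ k, 1 ≤ k → k < n+1 → (1:G) * ((List.ofFn w).take k).prod ∉ Γ) ↔
      (∀ k, 1 ≤ k → k ≤ n → qm Γ (pt w k) ≠ ee Γ) := by
    constructor
    · intro h k hk hk' he
      exact h k hk (by omega) (by rw [one_mul]; exact (qm_eq_ee_iff Γ _).mp he)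
    · intro h k hk hk' hm
      rw [one_mul] at hm
      exact h k hk (by omega) ((qm_eq_ee_iff Γ _).mpr hm)
  by_cases hmem : (List.ofFn w).prod ∈ Γ
  · rw [tsum_eq_single (⟨(List.ofFn w).prod, hmem⟩ : Γ) ?_]
    · by_cases h1 : ∀ k, 1 ≤ k → k ≤ n → qm Γ (pt w k) ≠ ee Γ
      · rw [SHEf, if_pos ⟨hiffk.mpr h1, one_mul _⟩, AAf,
          if_pos ⟨h1, by rw [pt_top]; exact (qm_eq_ee_iff Γ _).mpr hmem⟩]
      · rw [SHEf, if_neg (fun hh => h1 (hiffk.mp hh.1)), AAf,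
          if_neg (fun hh => h1 hh.1)]
    · intro γ' hγ'
      rw [SHEf, if_neg]
      rintro ⟨-, h2⟩
      rw [one_mul] at h2
      exact hγ' (Subtype.ext h2.symm)
  · have hz : ∀ γ' : Γ, SHEf ν Γ n (↑γ') w = 0 := by
      intro γ'
      rw [SHEf, if_neg]
      rintro ⟨-, h2⟩
      rw [one_mul] at h2
      exact hmem (h2 ▸ γ'.2)
    rw [(tsum_congr hz).trans tsum_zero, AAf, if_neg]
    rintro ⟨-, h2⟩
    rw [pt_top] at h2
    exact hmem ((qm_eq_ee_iff Γ _).mp h2)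

end bridge

end KacAux

/-- **Kac formula for subgroups.** For a generating probability measure `μ` on a
countable group `G` and a finite index subgroup `Γ`, the `μ`-random walk hits `Γ`
almost surely, and the expected return time `E[τ] = ∑_{n ≥ 0} P(τ > n)` equals the
index `[G : Γ]`. -/
theorem kac_formula {G : Type*} [Group G] [Countable G] (μ : G → ℝ) (Γ : Subgroup G)
    (hpos : ∀ g, 0 ≤ μ g) (hsum : ∑' g, μ g = 1)
    (hgen : ∀ g : G, ∃ n : ℕ, 1 ≤ n ∧ ∃ w : Fin n → G,
      (∀ i, 0 < μ (w i)) ∧ (List.ofFn w).prod = g)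
    (hfi : Γ.FiniteIndex) :
    (∑' γ : Γ, hitProb μ Γ 1 ↑γ) = 1 ∧
      (∑' n : ℕ, tailProb μ Γ n) = (Γ.index : ℝ) := by
  classical
  have hsummable : Summable μ := by
    by_contra h
    rw [tsum_eq_zero_of_not_summable h] at hsum
    norm_num at hsum
  set ν : G → ℝ≥0∞ := fun g => ENNReal.ofReal (μ g) with hν_def
  have hν1 : ∑' g, ν g = 1 := by
    simp only [hν_def]
    rw [← ENNReal.ofReal_tsum_of_nonneg hpos hsummable, hsum, ENNReal.ofReal_one]
  have hgl : ∀ g : G, ∃ l : List G, l ≠ [] ∧ (∀ x ∈ l, ν x ≠ 0) ∧ l.prod = g := by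
    intro g
    obtain ⟨n, hn1, w, hwpos, hwprod⟩ := hgen g
    refine ⟨List.ofFn w, ?_, ?_, hwprod⟩
    · intro h
      have h2 := congrArg List.length h
      simp only [List.length_ofFn, List.length_nil] at h2
      omega
    · intro x hx
      rw [List.mem_ofFn] at hx
      obtain ⟨i, rfl⟩ := hx
      simp only [hν_def, ne_eq, ENNReal.ofReal_eq_zero, not_le]
      exact hwpos i
  haveI hQfin : Finite (G ⧸ Γ) := by
    have hidx := hfi.index_ne_zero
    rw [Subgroup.index_eq_card] at hidx
    exact (Nat.card_ne_zero.mp hidx).2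
  obtain ⟨K, hK1, ρ, hρ1, hρ⟩ := KacAux.exists_decay ν Γ hν1 hgl
  have hfin : ∑' n, KacAux.TT ν Γ n ≠ ⊤ := KacAux.sum_TT_ne_top ν Γ hν1 hK1 hρ1 hρ
  have htend := KacAux.TT_tendsto ν Γ hν1 hK1 hρ1 hρ
  have hAA1 : ∑' n, KacAux.AA ν Γ n (KacAux.ee Γ) = 1 := KacAux.sum_AA_eq_one ν Γ hν1 htend
  constructor
  · have hSHE : ∀ γ : Γ, ∀ n : ℕ, stepHit μ Γ 1 (n+1) (↑γ) = (KacAux.SHE ν Γ n ↑γ).toReal :=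
      fun γ n => KacAux.stepHit_eq Γ μ hpos n ↑γ
    have htot : ∑' (γ : Γ), ∑' n, KacAux.SHE ν Γ n ↑γ = 1 := by
      rw [ENNReal.tsum_comm (f := fun (γ : Γ) (n : ℕ) => KacAux.SHE ν Γ n ↑γ)]
      rw [tsum_congr (fun n => KacAux.SHE_gamma ν Γ n), hAA1]
    have hsumne : (∑' (γ : Γ), ∑' n, KacAux.SHE ν Γ n ↑γ) ≠ ⊤ := by
      rw [htot]; exact ENNReal.one_ne_top
    have hγfin : ∀ γ : Γ, (∑' n, KacAux.SHE ν Γ n ↑γ) ≠ ⊤ :=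
      fun γ => ne_top_of_le_ne_top hsumne (ENNReal.le_tsum γ)
    have hhit : ∀ γ : Γ, hitProb μ Γ 1 ↑γ = (∑' n, KacAux.SHE ν Γ n ↑γ).toReal := by
      intro γ
      rw [hitProb,
        ENNReal.tsum_toReal_eq (fun n => ne_top_of_le_ne_top (hγfin γ) (ENNReal.le_tsum n))]
      exact tsum_congr fun n => hSHE γ n
    rw [tsum_congr hhit, ← ENNReal.tsum_toReal_eq hγfin, htot, ENNReal.toReal_one]
  · have htail : ∀ n, tailProb μ Γ n = (KacAux.TT ν Γ n).toReal :=
      fun n => KacAux.tailProb_eq Γ μ hpos n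
    have hTTne : ∀ n, KacAux.TT ν Γ n ≠ ⊤ :=
      fun n => ne_top_of_le_ne_top ENNReal.one_ne_top (KacAux.TT_le_one ν Γ hν1 n)
    rw [tsum_congr htail, ← ENNReal.tsum_toReal_eq hTTne,
      KacAux.sum_TT_eq ν Γ hν1 hgl hfin, ← Subgroup.index_eq_card]
    simp
end

section
/- Let G be a countable discrete group with generating probability measure μ, and Γ a μ-recurrent subgroup with hitting measure θ. If h : G → ℝ is a bounded μ-harmonic function, then h(g) = Σ_{γ ∈ Γ} θ_g(γ)·h(γ) for all g ∈ G, where θ_g is the hitting measure on Γ of the μ-random walk started at g. -/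
open scoped Classical BigOperators

set_option linter.unusedSectionVars false
set_option linter.unusedVariables false
namespace HEHA
variable {G : Type*} [Group G]

/-- snoc equivalence -/
def snocE (G : Type*) (n : ℕ) : ((Fin n → G) × G) ≃ (Fin (n+1) → G) where
  toFun p := Fin.snoc p.1 p.2
  invFun w := (Fin.init w, w (Fin.last n))
  left_inv p := by simp [Fin.init_snoc, Fin.snoc_last]
  right_inv w := by simp [Fin.snoc_init_self]

lemma ofFn_snoc {n : ℕ} (w : Fin n → G) (a : G) :
    List.ofFn (Fin.snoc w a : Fin (n+1) → G) = List.ofFn w ++ [a] := by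
  rw [List.ofFn_succ']
  simp [Fin.snoc_castSucc, Fin.snoc_last, List.concat_eq_append]

lemma take_ofFn_snoc {n : ℕ} (w : Fin n → G) (a : G) {k : ℕ} (hk : k ≤ n) :
    ((List.ofFn (Fin.snoc w a : Fin (n+1) → G)).take k) = (List.ofFn w).take k := by
  rw [ofFn_snoc, List.take_append_of_le_length (by simp [hk])]

lemma prod_ofFn_snoc {n : ℕ} (w : Fin n → G) (a : G) :
    (List.ofFn (Fin.snoc w a : Fin (n+1) → G)).prod = (List.ofFn w).prod * a := by
  rw [ofFn_snoc]; simp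

lemma prod_mu_snoc (μ : G → ℝ) {n : ℕ} (w : Fin n → G) (a : G) :
    ∏ i, μ ((Fin.snoc w a : Fin (n+1) → G) i) = (∏ i, μ (w i)) * μ a := by
  rw [Fin.prod_univ_castSucc]
  simp [Fin.snoc_castSucc, Fin.snoc_last]

lemma take_ofFn_full {n : ℕ} (w : Fin n → G) : (List.ofFn w).take n = List.ofFn w := by
  apply List.take_of_length_le
  simp

variable {μ : G → ℝ} {Γ : Subgroup G}

lemma hmu (hpos : ∀ g, 0 ≤ μ g) (hsum : ∑' g, μ g = 1) : Summable μ := by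
  by_contra hns
  rw [tsum_eq_zero_of_not_summable hns] at hsum
  norm_num at hsum

lemma mu_le_one (hpos : ∀ g, 0 ≤ μ g) (hsum : ∑' g, μ g = 1) (g : G) : μ g ≤ 1 := by
  rw [← hsum]
  exact Summable.le_tsum (hmu hpos hsum) g (fun j _ => hpos j)

lemma mul_summable_nn {β γ : Type*} {F : β → ℝ} {K : γ → ℝ} (hF : Summable F)
    (hK : Summable K) (h1 : ∀ b, 0 ≤ F b) (h2 : ∀ c, 0 ≤ K c) :
    Summable fun p : β × γ => F p.1 * K p.2 :=
  Summable.mul_of_nonneg hF hK h1 h2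

lemma tsum_prod_w {β γ : Type*} {f : β × γ → ℝ} (hf : Summable f)
    (hfib : ∀ b, Summable fun c => f (b, c)) :
    ∑' p : β × γ, f p = ∑' (b : β) (c : γ), f (b, c) :=
  Summable.tsum_prod' hf hfib

lemma prod_nn (hpos : ∀ g, 0 ≤ μ g) {n : ℕ} (w : Fin n → G) : 0 ≤ ∏ i, μ (w i) :=
  Finset.prod_nonneg fun i _ => hpos (w i)

lemma summable_pi (hpos : ∀ g, 0 ≤ μ g) (hsum : ∑' g, μ g = 1) (n : ℕ) :
    Summable fun w : Fin n → G => ∏ i, μ (w i) := by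
  induction n with
  | zero =>
      have huni : ∀ w : Fin 0 → G, w = (fun i => i.elim0) := fun w => funext fun i => i.elim0
      exact (hasSum_single (f := fun w : Fin 0 → G => ∏ i, μ (w i)) (fun i => i.elim0)
        (fun w hw => absurd (huni w) hw)).summable
  | succ n ih =>
      have hp : Summable fun p : (Fin n → G) × G => (∏ i, μ (p.1 i)) * μ p.2 :=
        mul_summable_nn (F := fun w : Fin n → G => ∏ i, μ (w i)) (K := μ) ih
          (hmu hpos hsum) (fun w => prod_nn hpos w) (fun g => hpos g)
      have := (snocE G n).summable_iff (f := fun w : Fin (n+1) → G => ∏ i, μ (w i))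
      rw [← this]
      convert hp using 1
      funext p
      exact prod_mu_snoc μ p.1 p.2

lemma tsum_pi (hpos : ∀ g, 0 ≤ μ g) (hsum : ∑' g, μ g = 1) (n : ℕ) :
    ∑' w : Fin n → G, ∏ i, μ (w i) = 1 := by
  induction n with
  | zero =>
      have huni : ∀ w : Fin 0 → G, w = (fun i => i.elim0) := fun w => funext fun i => i.elim0
      rw [tsum_eq_single (fun i => i.elim0) (fun w hw => absurd (huni w) hw)]
      simp
  | succ n ih =>
      have hp : Summable fun p : (Fin n → G) × G => (∏ i, μ (p.1 i)) * μ p.2 :=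
        mul_summable_nn (F := fun w : Fin n → G => ∏ i, μ (w i)) (K := μ)
          (summable_pi hpos hsum n) (hmu hpos hsum)
          (fun w => prod_nn hpos w) (fun g => hpos g)
      calc ∑' w : Fin (n+1) → G, ∏ i, μ (w i)
          = ∑' p : (Fin n → G) × G, ∏ i, μ ((snocE G n p) i) :=
            ((snocE G n).tsum_eq _).symm
        _ = ∑' p : (Fin n → G) × G, (∏ i, μ (p.1 i)) * μ p.2 := by
            exact tsum_congr fun p => prod_mu_snoc μ p.1 p.2
        _ = ∑' (w : Fin n → G), ∑' (a : G), (∏ i, μ (w i)) * μ a :=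
            tsum_prod_w hp (fun w => (hmu hpos hsum).mul_left (∏ i, μ (w i)))
        _ = ∑' w : Fin n → G, ∏ i, μ (w i) :=
            tsum_congr fun w => by rw [tsum_mul_left, hsum, mul_one]
        _ = 1 := ih

noncomputable def surv (μ : G → ℝ) (Γ : Subgroup G) (x : G) (n : ℕ) (y : G) : ℝ :=
  ∑' w : Fin n → G,
    if (∀ k, 1 ≤ k → k ≤ n → x * ((List.ofFn w).take k).prod ∉ Γ) ∧
        x * (List.ofFn w).prod = y
    then ∏ i, μ (w i) else 0

lemma summable_ind (hpos : ∀ g, 0 ≤ μ g) (hsum : ∑' g, μ g = 1) (n : ℕ)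
    (P : (Fin n → G) → Prop) :
    Summable fun w : Fin n → G => if P w then ∏ i, μ (w i) else 0 :=
  Summable.of_nonneg_of_le
    (fun w => by split_ifs; exacts [prod_nn hpos w, le_rfl])
    (fun w => by split_ifs; exacts [le_rfl, prod_nn hpos w])
    (summable_pi hpos hsum n)

lemma ind_le_prod (hpos : ∀ g, 0 ≤ μ g) {n : ℕ} (P : (Fin n → G) → Prop) (w : Fin n → G) :
    (if P w then ∏ i, μ (w i) else 0) ≤ ∏ i, μ (w i) := by
  split_ifs; exacts [le_rfl, prod_nn hpos w]

lemma summable_pair (hpos : ∀ g, 0 ≤ μ g) (hsum : ∑' g, μ g = 1) (n : ℕ) (x : G)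
    (Q : (Fin n → G) → Prop) (v : G → ℝ) (hv0 : ∀ y, 0 ≤ v y) (hv1 : ∀ y, v y ≤ 1) :
    Summable fun p : G × (Fin n → G) =>
      if Q p.2 ∧ x * (List.ofFn p.2).prod = p.1 then (∏ i, μ (p.2 i)) * v p.1 else 0 := by
  set f : G × (Fin n → G) → ℝ := fun p =>
    if Q p.2 ∧ x * (List.ofFn p.2).prod = p.1 then (∏ i, μ (p.2 i)) * v p.1 else 0 with hf
  set g : (Fin n → G) → G × (Fin n → G) := fun w => (x * (List.ofFn w).prod, w) with hgdef
  have hg : Function.Injective g := fun w w' hww => congrArg Prod.snd hww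
  have hsupp : ∀ p ∉ Set.range g, f p = 0 := by
    intro p hp
    rw [hf]
    simp only
    rw [if_neg]
    rintro ⟨hQ, hx⟩
    exact hp ⟨p.2, Prod.ext hx rfl⟩
  rw [← hg.summable_iff hsupp]
  apply Summable.of_nonneg_of_le (f := fun w : Fin n → G => ∏ i, μ (w i))
  · intro w
    simp only [Function.comp, hf, hgdef]
    split_ifs
    · exact mul_nonneg (prod_nn hpos w) (hv0 _)
    · exact le_rfl
  · intro w
    simp only [Function.comp, hf, hgdef]
    split_ifs
    · calc (∏ i, μ (w i)) * v (x * (List.ofFn w).prod) ≤ (∏ i, μ (w i)) * 1 :=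
        mul_le_mul_of_nonneg_left (hv1 _) (prod_nn hpos w)
      _ = ∏ i, μ (w i) := mul_one _
    · exact prod_nn hpos w
  · exact summable_pi hpos hsum n

lemma surv_nonneg (hpos : ∀ g, 0 ≤ μ g) (x : G) (n : ℕ) (y : G) :
    0 ≤ surv μ Γ x n y :=
  tsum_nonneg fun w => by
    split_ifs; exacts [prod_nn hpos w, le_rfl]

lemma stepHit_nonneg (hpos : ∀ g, 0 ≤ μ g) (x : G) (n : ℕ) (y : G) :
    0 ≤ stepHit μ Γ x n y :=
  tsum_nonneg fun w => by
    split_ifs; exacts [prod_nn hpos w, le_rfl]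

lemma marg_summable {β γ : Type*} {f : β × γ → ℝ} (h0 : ∀ p, 0 ≤ f p) (hs : Summable f) :
    Summable fun b => ∑' c, f (b, c) :=
  ((summable_prod_of_nonneg h0).mp hs).2

lemma fib_summable {β γ : Type*} {f : β × γ → ℝ} (hs : Summable f) (b : β) :
    Summable fun c => f (b, c) :=
  hs.prod_factor b

lemma summable_surv (hpos : ∀ g, 0 ≤ μ g) (hsum : ∑' g, μ g = 1) (x : G) (n : ℕ) :
    Summable fun y : G => surv μ Γ x n y := by
  have hs := summable_pair hpos hsum n x
    (fun w => ∀ k, 1 ≤ k → k ≤ n → x * ((List.ofFn w).take k).prod ∉ Γ)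
    (fun _ => 1) (fun _ => zero_le_one) (fun _ => le_rfl)
  have h0 : ∀ p : G × (Fin n → G), (0:ℝ) ≤
      if (∀ k, 1 ≤ k → k ≤ n → x * ((List.ofFn p.2).take k).prod ∉ Γ) ∧
          x * (List.ofFn p.2).prod = p.1 then (∏ i, μ (p.2 i)) * 1 else 0 := by
    intro p
    split_ifs
    · exact mul_nonneg (prod_nn hpos p.2) zero_le_one
    · exact le_rfl
  have hs2 : Summable fun p : G × (Fin n → G) =>
      if (∀ k, 1 ≤ k → k ≤ n → x * ((List.ofFn p.2).take k).prod ∉ Γ) ∧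
          x * (List.ofFn p.2).prod = p.1 then (∏ i, μ (p.2 i)) * 1 else 0 :=
    hs.congr fun p => by
      by_cases hc : (∀ k, 1 ≤ k → k ≤ n → x * ((List.ofFn p.2).take k).prod ∉ Γ) ∧
          x * (List.ofFn p.2).prod = p.1
      · rw [if_pos hc, if_pos hc]
      · rw [if_neg hc, if_neg hc]
  have hm := marg_summable h0 hs2
  apply hm.congr
  intro y
  unfold surv
  exact tsum_congr fun w => if_congr Iff.rfl (mul_one _) rfl

lemma summable_stepHit (hpos : ∀ g, 0 ≤ μ g) (hsum : ∑' g, μ g = 1) (x : G) (n : ℕ) :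
    Summable fun y : G => stepHit μ Γ x n y := by
  have hs := summable_pair hpos hsum n x
    (fun w => ∀ k, 1 ≤ k → k < n → x * ((List.ofFn w).take k).prod ∉ Γ)
    (fun _ => 1) (fun _ => zero_le_one) (fun _ => le_rfl)
  have h0 : ∀ p : G × (Fin n → G), (0:ℝ) ≤
      if (∀ k, 1 ≤ k → k < n → x * ((List.ofFn p.2).take k).prod ∉ Γ) ∧
          x * (List.ofFn p.2).prod = p.1 then (∏ i, μ (p.2 i)) * 1 else 0 := by
    intro p
    split_ifs
    · exact mul_nonneg (prod_nn hpos p.2) zero_le_one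
    · exact le_rfl
  have hs2 : Summable fun p : G × (Fin n → G) =>
      if (∀ k, 1 ≤ k → k < n → x * ((List.ofFn p.2).take k).prod ∉ Γ) ∧
          x * (List.ofFn p.2).prod = p.1 then (∏ i, μ (p.2 i)) * 1 else 0 :=
    hs.congr fun p => by
      by_cases hc : (∀ k, 1 ≤ k → k < n → x * ((List.ofFn p.2).take k).prod ∉ Γ) ∧
          x * (List.ofFn p.2).prod = p.1
      · rw [if_pos hc, if_pos hc]
      · rw [if_neg hc, if_neg hc]
  have hm := marg_summable h0 hs2
  apply hm.congr
  intro y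
  unfold stepHit
  exact tsum_congr fun w => if_congr Iff.rfl (mul_one _) rfl

def QS (Γ : Subgroup G) (x : G) (n : ℕ) (w : Fin n → G) : Prop :=
  ∀ k, 1 ≤ k → k ≤ n → x * ((List.ofFn w).take k).prod ∉ Γ

lemma summable_ind' (hpos : ∀ g, 0 ≤ μ g) (hsum : ∑' g, μ g = 1) (n : ℕ)
    {f : (Fin n → G) → ℝ} (hle : ∀ w, 0 ≤ f w) (hb : ∀ w, f w ≤ ∏ i, μ (w i)) :
    Summable f :=
  Summable.of_nonneg_of_le hle hb (summable_pi hpos hsum n)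

lemma surv_eq (x : G) (n : ℕ) (y : G) :
    surv μ Γ x n y =
      ∑' w : Fin n → G,
        if QS Γ x n w ∧ x * (List.ofFn w).prod = y then ∏ i, μ (w i) else 0 := by
  unfold surv
  refine tsum_congr fun w => ?_
  by_cases hc : QS Γ x n w ∧ x * (List.ofFn w).prod = y
  · rw [if_pos hc]; exact if_pos hc
  · rw [if_neg hc]; exact if_neg hc

lemma surv_summand_summable (hpos : ∀ g, 0 ≤ μ g) (hsum : ∑' g, μ g = 1)
    (x : G) (n : ℕ) (y : G) :
    Summable fun w : Fin n → G =>
      if QS Γ x n w ∧ x * (List.ofFn w).prod = y then ∏ i, μ (w i) else 0 :=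
  summable_ind' hpos hsum n
    (fun w => by split_ifs; exacts [prod_nn hpos w, le_rfl])
    (fun w => by split_ifs; exacts [le_rfl, prod_nn hpos w])

lemma surv_zero (x y : G) : surv μ Γ x 0 y = if y = x then 1 else 0 := by
  rw [surv_eq]
  rw [tsum_eq_single (fun i : Fin 0 => i.elim0)
    (fun w hw => absurd (funext fun i => i.elim0) hw)]
  have hQ : QS Γ x 0 (fun i : Fin 0 => i.elim0) := fun k h1 h0 => by omega
  by_cases hxy : y = x
  · rw [if_pos ⟨hQ, by simp [hxy]⟩, if_pos hxy]
    simp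
  · rw [if_neg, if_neg hxy]
    rintro ⟨-, h2⟩
    exact hxy (by simpa using h2.symm)

lemma stepHit_eq_surv (x z : G) (hz : z ∉ Γ) (n : ℕ) :
    stepHit μ Γ x (n+1) z = surv μ Γ x (n+1) z := by
  unfold stepHit surv
  refine tsum_congr fun w => ?_
  by_cases h2 : x * (List.ofFn w).prod = z
  · by_cases hA : ∀ k, 1 ≤ k → k < n+1 → x * ((List.ofFn w).take k).prod ∉ Γ
    · have hB : ∀ k, 1 ≤ k → k ≤ n+1 → x * ((List.ofFn w).take k).prod ∉ Γ := by
        intro k h1 hk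
        rcases lt_or_eq_of_le hk with hlt | heq
        · exact hA k h1 hlt
        · subst heq
          rw [take_ofFn_full w, h2]
          exact hz
      rw [if_pos ⟨hA, h2⟩, if_pos ⟨hB, h2⟩]
    · rw [if_neg (fun hc => hA hc.1), if_neg
        (fun hc => hA (fun k h1 hk => hc.1 k h1 (le_of_lt hk)))]
  · rw [if_neg (fun hc => h2 hc.2), if_neg (fun hc => h2 hc.2)]

lemma surv_mem_zero (x z : G) (hz : z ∈ Γ) (n : ℕ) : surv μ Γ x (n+1) z = 0 := by
  unfold surv
  have : ∀ w : Fin (n+1) → G,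
      (if (∀ k, 1 ≤ k → k ≤ n+1 → x * ((List.ofFn w).take k).prod ∉ Γ) ∧
          x * (List.ofFn w).prod = z then ∏ i, μ (w i) else 0) = 0 := by
    intro w
    rw [if_neg]
    rintro ⟨hA, h2⟩
    exact hA (n+1) (Nat.le_add_left 1 n) le_rfl (by rw [take_ofFn_full w, h2]; exact hz)
  rw [tsum_congr this, tsum_zero]

lemma stepHit_succ (hpos : ∀ g, 0 ≤ μ g) (hsum : ∑' g, μ g = 1) (x z : G) (n : ℕ) :
    stepHit μ Γ x (n+1) z = ∑' y, surv μ Γ x n y * μ (y⁻¹ * z) := by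
  have key : ∀ (w' : Fin n → G) (a : G),
      ((∀ k, 1 ≤ k → k < n+1 →
          x * ((List.ofFn (Fin.snoc w' a : Fin (n+1) → G)).take k).prod ∉ Γ) ∧
        x * (List.ofFn (Fin.snoc w' a : Fin (n+1) → G)).prod = z)
      ↔ (QS Γ x n w' ∧ x * (List.ofFn w').prod * a = z) := by
    intro w' a
    rw [prod_ofFn_snoc, ← mul_assoc]
    constructor
    · rintro ⟨hA, h2⟩
      refine ⟨fun k h1 hk => ?_, h2⟩
      have := hA k h1 (Nat.lt_succ_of_le hk)
      rwa [take_ofFn_snoc w' a hk] at this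
    · rintro ⟨hA, h2⟩
      refine ⟨fun k h1 hk => ?_, h2⟩
      have hk' : k ≤ n := Nat.lt_succ_iff.mp hk
      rw [take_ofFn_snoc w' a hk']
      exact hA k h1 hk'
  -- Left side
  have hFs : Summable fun w : Fin (n+1) → G =>
      if (∀ k, 1 ≤ k → k < n+1 → x * ((List.ofFn w).take k).prod ∉ Γ) ∧
          x * (List.ofFn w).prod = z then ∏ i, μ (w i) else 0 :=
    summable_ind' hpos hsum (n+1)
      (fun w => by split_ifs; exacts [prod_nn hpos w, le_rfl])
      (fun w => by split_ifs; exacts [le_rfl, prod_nn hpos w])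
  have conv1 : ∀ p : (Fin n → G) × G,
      (if (∀ k, 1 ≤ k → k < n+1 →
            x * ((List.ofFn ((snocE G n) p)).take k).prod ∉ Γ) ∧
          x * (List.ofFn ((snocE G n) p)).prod = z
        then ∏ i, μ (((snocE G n) p) i) else 0)
      = (if QS Γ x n p.1 ∧ x * (List.ofFn p.1).prod * p.2 = z
          then (∏ i, μ (p.1 i)) * μ p.2 else 0) := by
    rintro ⟨w', a⟩
    have hsnoc : (snocE G n) (w', a) = (Fin.snoc w' a : Fin (n+1) → G) := rfl
    rw [hsnoc]
    by_cases hc : QS Γ x n w' ∧ x * (List.ofFn w').prod * a = z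
    · rw [if_pos ((key w' a).mpr hc), if_pos hc, prod_mu_snoc]
    · rw [if_neg (fun hcc => hc ((key w' a).mp hcc)), if_neg hc]
  have hp2 : Summable fun p : (Fin n → G) × G =>
      if QS Γ x n p.1 ∧ x * (List.ofFn p.1).prod * p.2 = z
        then (∏ i, μ (p.1 i)) * μ p.2 else 0 :=
    (((snocE G n).summable_iff).mpr hFs).congr conv1
  have hfib : ∀ w' : Fin n → G, Summable fun a : G =>
      if QS Γ x n w' ∧ x * (List.ofFn w').prod * a = z
        then (∏ i, μ (w' i)) * μ a else 0 := by
    intro w'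
    apply Summable.of_nonneg_of_le (f := fun a : G => (∏ i, μ (w' i)) * μ a)
    · intro a
      split_ifs
      · exact mul_nonneg (prod_nn hpos w') (hpos a)
      · exact le_rfl
    · intro a
      split_ifs
      · exact le_rfl
      · exact mul_nonneg (prod_nn hpos w') (hpos a)
    · exact (hmu hpos hsum).mul_left (∏ i, μ (w' i))
  have inner : ∀ w' : Fin n → G,
      (∑' a : G, if QS Γ x n w' ∧ x * (List.ofFn w').prod * a = z
          then (∏ i, μ (w' i)) * μ a else 0)
      = (if QS Γ x n w'
          then (∏ i, μ (w' i)) * μ ((x * (List.ofFn w').prod)⁻¹ * z) else 0) := by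
    intro w'
    by_cases hQ : QS Γ x n w'
    · rw [if_pos hQ, tsum_eq_single ((x * (List.ofFn w').prod)⁻¹ * z) ?_]
      · rw [if_pos ⟨hQ, mul_inv_cancel_left _ _⟩]
      · intro a ha
        rw [if_neg]
        rintro ⟨-, h2⟩
        exact ha (by rw [← h2, inv_mul_cancel_left])
    · rw [if_neg hQ, tsum_congr (fun a => if_neg (fun hc => hQ hc.1)), tsum_zero]
  -- Right side
  have hsummand : ∀ y : G, Summable fun w : Fin n → G =>
      if QS Γ x n w ∧ x * (List.ofFn w).prod = y then ∏ i, μ (w i) else 0 :=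
    fun y => surv_summand_summable (Γ := Γ) hpos hsum x n y
  have rhs1 : ∀ y : G, surv μ Γ x n y * μ (y⁻¹ * z)
      = ∑' w : Fin n → G, (if QS Γ x n w ∧ x * (List.ofFn w).prod = y
          then (∏ i, μ (w i)) * μ (y⁻¹ * z) else 0) := by
    intro y
    rw [surv_eq, ← Summable.tsum_mul_right _ (hsummand y)]
    exact tsum_congr fun w => by rw [ite_mul, zero_mul]
  have hF2 : Summable fun p : G × (Fin n → G) =>
      if QS Γ x n p.2 ∧ x * (List.ofFn p.2).prod = p.1
        then (∏ i, μ (p.2 i)) * μ (p.1⁻¹ * z) else 0 := by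
    have := summable_pair hpos hsum n x (QS Γ x n) (fun y => μ (y⁻¹ * z))
      (fun y => hpos _) (fun y => mu_le_one hpos hsum _)
    apply this.congr
    intro p
    by_cases hc : QS Γ x n p.2 ∧ x * (List.ofFn p.2).prod = p.1
    · rw [if_pos hc]
    · rw [if_neg hc]
  have hfib2 : ∀ y : G, Summable fun w : Fin n → G =>
      if QS Γ x n w ∧ x * (List.ofFn w).prod = y
        then (∏ i, μ (w i)) * μ (y⁻¹ * z) else 0 := by
    intro y
    have := (hsummand y).mul_right (μ (y⁻¹ * z))
    apply this.congr
    intro w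
    rw [ite_mul, zero_mul]
  have hg : Function.Injective
      (fun w : Fin n → G => ((x * (List.ofFn w).prod, w) : G × (Fin n → G))) :=
    fun w w' hww => congrArg Prod.snd hww
  have hsupp : Function.support (fun p : G × (Fin n → G) =>
      if QS Γ x n p.2 ∧ x * (List.ofFn p.2).prod = p.1
        then (∏ i, μ (p.2 i)) * μ (p.1⁻¹ * z) else 0)
      ⊆ Set.range (fun w : Fin n → G => ((x * (List.ofFn w).prod, w) : G × (Fin n → G))) := by
    intro p hp
    rcases em (QS Γ x n p.2 ∧ x * (List.ofFn p.2).prod = p.1) with hc | hc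
    · exact ⟨p.2, Prod.ext hc.2 rfl⟩
    · exact absurd (if_neg hc) hp
  calc stepHit μ Γ x (n+1) z
      = ∑' p : (Fin n → G) × G,
          (if (∀ k, 1 ≤ k → k < n+1 →
                x * ((List.ofFn ((snocE G n) p)).take k).prod ∉ Γ) ∧
              x * (List.ofFn ((snocE G n) p)).prod = z
            then ∏ i, μ (((snocE G n) p) i) else 0) := by
        unfold stepHit
        exact ((snocE G n).tsum_eq _).symm
    _ = ∑' p : (Fin n → G) × G,
          (if QS Γ x n p.1 ∧ x * (List.ofFn p.1).prod * p.2 = z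
            then (∏ i, μ (p.1 i)) * μ p.2 else 0) := tsum_congr conv1
    _ = ∑' (w' : Fin n → G) (a : G),
          (if QS Γ x n w' ∧ x * (List.ofFn w').prod * a = z
            then (∏ i, μ (w' i)) * μ a else 0) := tsum_prod_w hp2 hfib
    _ = ∑' w' : Fin n → G,
          (if QS Γ x n w'
            then (∏ i, μ (w' i)) * μ ((x * (List.ofFn w').prod)⁻¹ * z) else 0) :=
        tsum_congr inner
    _ = ∑' w' : Fin n → G,
          (if QS Γ x n w' ∧ x * (List.ofFn w').prod = x * (List.ofFn w').prod
            then (∏ i, μ (w' i)) * μ ((x * (List.ofFn w').prod)⁻¹ * z) else 0) := by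
        refine tsum_congr fun w' => ?_
        by_cases hQ : QS Γ x n w'
        · rw [if_pos hQ, if_pos ⟨hQ, rfl⟩]
        · rw [if_neg hQ, if_neg (fun hc => hQ hc.1)]
    _ = ∑' p : G × (Fin n → G),
          (if QS Γ x n p.2 ∧ x * (List.ofFn p.2).prod = p.1
            then (∏ i, μ (p.2 i)) * μ (p.1⁻¹ * z) else 0) := hg.tsum_eq hsupp
    _ = ∑' (y : G) (w : Fin n → G),
          (if QS Γ x n w ∧ x * (List.ofFn w).prod = y
            then (∏ i, μ (w i)) * μ (y⁻¹ * z) else 0) := tsum_prod_w hF2 hfib2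
    _ = ∑' y : G, surv μ Γ x n y * μ (y⁻¹ * z) :=
        tsum_congr fun y => (rhs1 y).symm

lemma mushift (hpos : ∀ g, 0 ≤ μ g) (hsum : ∑' g, μ g = 1) (y : G) :
    Summable fun z : G => μ (y⁻¹ * z) := by
  have := ((Equiv.mulLeft y⁻¹).summable_iff (f := μ)).mpr (hmu hpos hsum)
  exact this.congr fun z => rfl

lemma mushift_tsum (hpos : ∀ g, 0 ≤ μ g) (hsum : ∑' g, μ g = 1) (y : G) :
    ∑' z : G, μ (y⁻¹ * z) = 1 := by
  rw [← hsum, ← (Equiv.mulLeft y⁻¹).tsum_eq μ]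
  exact tsum_congr fun z => rfl

lemma harm_shift {h : G → ℝ} (hharm : ∀ g, h g = ∑' g₁ : G, μ g₁ * h (g * g₁)) (y : G) :
    h y = ∑' z : G, μ (y⁻¹ * z) * h z := by
  rw [hharm y, ← (Equiv.mulLeft y⁻¹).tsum_eq (fun g1 => μ g1 * h (y * g1))]
  exact tsum_congr fun z => by
    show μ (y⁻¹ * z) * h (y * (y⁻¹ * z)) = μ (y⁻¹ * z) * h z
    rw [mul_inv_cancel_left]

lemma summable_surv_h (hpos : ∀ g, 0 ≤ μ g) (hsum : ∑' g, μ g = 1)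
    {h : G → ℝ} {C : ℝ} (hb : ∀ g, |h g| ≤ C) (x : G) (n : ℕ) :
    Summable fun y : G => surv μ Γ x n y * h y := by
  rw [← summable_abs_iff]
  apply Summable.of_nonneg_of_le (fun y => abs_nonneg _) (fun y => ?_)
    ((summable_surv (Γ := Γ) hpos hsum x n).mul_right C)
  rw [abs_mul, abs_of_nonneg (surv_nonneg hpos x n y)]
  exact mul_le_mul_of_nonneg_left (hb y) (surv_nonneg hpos x n y)

lemma summable_stepHit_h (hpos : ∀ g, 0 ≤ μ g) (hsum : ∑' g, μ g = 1)
    {h : G → ℝ} {C : ℝ} (hb : ∀ g, |h g| ≤ C) (x : G) (n : ℕ) :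
    Summable fun y : G => stepHit μ Γ x n y * h y := by
  rw [← summable_abs_iff]
  apply Summable.of_nonneg_of_le (fun y => abs_nonneg _) (fun y => ?_)
    ((summable_stepHit (Γ := Γ) hpos hsum x n).mul_right C)
  rw [abs_mul, abs_of_nonneg (stepHit_nonneg hpos x n y)]
  exact mul_le_mul_of_nonneg_left (hb y) (stepHit_nonneg hpos x n y)

lemma summable_sm (hpos : ∀ g, 0 ≤ μ g) (hsum : ∑' g, μ g = 1) (x : G) (n : ℕ) (z : G) :
    Summable fun y : G => surv μ Γ x n y * μ (y⁻¹ * z) := by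
  apply Summable.of_nonneg_of_le
    (fun y => mul_nonneg (surv_nonneg hpos x n y) (hpos _))
    (fun y => ?_) (summable_surv (Γ := Γ) hpos hsum x n)
  calc surv μ Γ x n y * μ (y⁻¹ * z) ≤ surv μ Γ x n y * 1 :=
        mul_le_mul_of_nonneg_left (mu_le_one hpos hsum _) (surv_nonneg hpos x n y)
    _ = surv μ Γ x n y := mul_one _

lemma summable_K (hpos : ∀ g, 0 ≤ μ g) (hsum : ∑' g, μ g = 1)
    {h : G → ℝ} {C : ℝ} (hb : ∀ g, |h g| ≤ C) (x : G) (n : ℕ) :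
    Summable fun p : G × G => surv μ Γ x n p.1 * (μ (p.1⁻¹ * p.2) * h p.2) := by
  have hC0 : 0 ≤ C := (abs_nonneg _).trans (hb 1)
  have hM : Summable fun p : G × G => surv μ Γ x n p.1 * (μ (p.1⁻¹ * p.2) * C) := by
    apply (summable_prod_of_nonneg ?_).mpr
    constructor
    · intro y
      exact ((mushift hpos hsum y).mul_right C).mul_left (surv μ Γ x n y)
    · have : ∀ y : G, ∑' z : G, surv μ Γ x n y * (μ (y⁻¹ * z) * C)
          = surv μ Γ x n y * C := by
        intro y
        rw [tsum_mul_left, Summable.tsum_mul_right _ (mushift hpos hsum y),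
          mushift_tsum hpos hsum y, one_mul]
      rw [show (fun y : G => ∑' z : G, surv μ Γ x n y * (μ (y⁻¹ * z) * C))
          = fun y : G => surv μ Γ x n y * C from funext this]
      exact (summable_surv (Γ := Γ) hpos hsum x n).mul_right C
    · intro p
      exact mul_nonneg (surv_nonneg hpos x n p.1) (mul_nonneg (hpos _) hC0)
  rw [← summable_abs_iff]
  apply Summable.of_nonneg_of_le (fun p => abs_nonneg _) (fun p => ?_) hM
  rw [abs_mul, abs_mul, abs_of_nonneg (surv_nonneg hpos x n p.1), abs_of_nonneg (hpos _)]
  exact mul_le_mul_of_nonneg_left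
    (mul_le_mul_of_nonneg_left (hb p.2) (hpos _)) (surv_nonneg hpos x n p.1)

lemma coeΓ : (Subgroup.subtype Γ).toFun = fun γ : Γ => (↑γ : G) := rfl

lemma tsum_subtype_coe (f : G → ℝ) :
    ∑' z : ↥((Γ : Set G)), f ↑z = ∑' γ : Γ, f ↑γ := by
  rw [← Equiv.tsum_eq
    ((Equiv.subtypeEquivRight fun x => Iff.rfl : ↥Γ ≃ ↥((Γ : Set G))))
    (fun z : ↥((Γ : Set G)) => f ↑z)]
  exact tsum_congr fun γ => by rcases γ with ⟨v, hv⟩; rfl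

lemma step_main (hpos : ∀ g, 0 ≤ μ g) (hsum : ∑' g, μ g = 1)
    {h : G → ℝ} {C : ℝ} (hb : ∀ g, |h g| ≤ C)
    (hharm : ∀ g : G, h g = ∑' g₁ : G, μ g₁ * h (g * g₁)) (x : G) (n : ℕ) :
    ∑' y : G, surv μ Γ x n y * h y
      = (∑' γ : Γ, stepHit μ Γ x (n+1) ↑γ * h ↑γ)
        + ∑' y : G, surv μ Γ x (n+1) y * h y := by
  have hK := summable_K (Γ := Γ) hpos hsum hb x n
  have hKfib : ∀ y : G, Summable fun z : G =>
      surv μ Γ x n y * (μ (y⁻¹ * z) * h z) := fun y =>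
    (hK.prod_factor y)
  have hKswap : Summable fun q : G × G =>
      surv μ Γ x n q.2 * (μ (q.2⁻¹ * q.1) * h q.1) := by
    have := hK.prod_symm
    exact this.congr fun q => rfl
  have hKcol : ∀ z : G, Summable fun y : G =>
      surv μ Γ x n y * (μ (y⁻¹ * z) * h z) := fun z =>
    hKswap.prod_factor z
  have key : ∑' y : G, surv μ Γ x n y * h y
      = ∑' z : G, stepHit μ Γ x (n+1) z * h z := by
    calc ∑' y : G, surv μ Γ x n y * h y
        = ∑' (y : G) (z : G), surv μ Γ x n y * (μ (y⁻¹ * z) * h z) := by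
          refine tsum_congr fun y => ?_
          rw [harm_shift hharm y, ← tsum_mul_left]
      _ = ∑' p : G × G, surv μ Γ x n p.1 * (μ (p.1⁻¹ * p.2) * h p.2) :=
          (tsum_prod_w hK hKfib).symm
      _ = ∑' q : G × G, surv μ Γ x n q.2 * (μ (q.2⁻¹ * q.1) * h q.1) :=
          ((Equiv.prodComm G G).tsum_eq
            (fun p : G × G => surv μ Γ x n p.1 * (μ (p.1⁻¹ * p.2) * h p.2))).symm
      _ = ∑' (z : G) (y : G), surv μ Γ x n y * (μ (y⁻¹ * z) * h z) :=
          tsum_prod_w hKswap (fun z => hKcol z)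
      _ = ∑' z : G, stepHit μ Γ x (n+1) z * h z := by
          refine tsum_congr fun z => ?_
          rw [tsum_congr (fun y => (mul_assoc (surv μ Γ x n y) (μ (y⁻¹ * z)) (h z)).symm),
            Summable.tsum_mul_right _ (summable_sm (Γ := Γ) hpos hsum x n z),
            ← stepHit_succ (Γ := Γ) hpos hsum x z n]
  have hs2 := summable_stepHit_h (Γ := Γ) hpos hsum hb x (n+1)
  have hs3 := summable_surv_h (Γ := Γ) hpos hsum hb x (n+1)
  have hsplit := Summable.tsum_subtype_add_tsum_subtype_compl hs2 (Γ : Set G)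
  have hsplit2 := Summable.tsum_subtype_add_tsum_subtype_compl hs3 (Γ : Set G)
  have hA2 : ∑' z : ↥((Γ : Set G)), surv μ Γ x (n+1) ↑z * h ↑z = 0 := by
    rw [tsum_congr (fun z : ↥((Γ : Set G)) => by
      rw [surv_mem_zero x ↑z z.2 n, zero_mul]), tsum_zero]
  have hBeq : ∑' z : ↥((Γ : Set G)ᶜ), stepHit μ Γ x (n+1) ↑z * h ↑z
      = ∑' z : ↥((Γ : Set G)ᶜ), surv μ Γ x (n+1) ↑z * h ↑z := by
    refine tsum_congr fun z => ?_
    rw [stepHit_eq_surv x ↑z z.2 n]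
  have hAeq : ∑' z : ↥((Γ : Set G)), stepHit μ Γ x (n+1) ↑z * h ↑z
      = ∑' γ : Γ, stepHit μ Γ x (n+1) ↑γ * h ↑γ :=
    tsum_subtype_coe (fun z => stepHit μ Γ x (n+1) z * h z)
  rw [key]
  linarith [hsplit, hsplit2, hA2, hBeq, hAeq]

lemma decomp (hpos : ∀ g, 0 ≤ μ g) (hsum : ∑' g, μ g = 1)
    {h : G → ℝ} {C : ℝ} (hb : ∀ g, |h g| ≤ C)
    (hharm : ∀ g : G, h g = ∑' g₁ : G, μ g₁ * h (g * g₁)) (x : G) (n : ℕ) :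
    h x = (∑ k ∈ Finset.range n, ∑' γ : Γ, stepHit μ Γ x (k+1) ↑γ * h ↑γ)
        + ∑' y : G, surv μ Γ x n y * h y := by
  induction n with
  | zero =>
      simp only [Finset.range_zero, Finset.sum_empty, zero_add]
      rw [tsum_congr (fun y => by rw [surv_zero, ite_mul, one_mul, zero_mul]),
        tsum_eq_single x (fun y hy => if_neg hy), if_pos rfl]
  | succ n ih =>
      rw [ih, step_main (Γ := Γ) hpos hsum hb hharm x n, Finset.sum_range_succ]
      ring

theorem harmonic_eq_hitting_average' {G : Type*} [Group G] [Countable G]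
    (μ : G → ℝ) (Γ : Subgroup G)
    (hpos : ∀ g, 0 ≤ μ g) (hsum : ∑' g, μ g = 1)
    (hrec : ∀ x : G, ∑' γ : Γ, hitProb μ Γ x ↑γ = 1)
    (h : G → ℝ)
    (hbdd : ∃ C, ∀ g, |h g| ≤ C)
    (hharm : ∀ g : G, h g = ∑' g₁ : G, μ g₁ * h (g * g₁)) :
    ∀ g : G, h g = ∑' γ : Γ, hitProb μ Γ g ↑γ * h ↑γ := by
  intro g
  obtain ⟨C, hb⟩ := hbdd
  have hC0 : 0 ≤ C := (abs_nonneg _).trans (hb 1)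
  -- mass identity from the constant function 1
  have hb1 : ∀ x : G, |(fun _ : G => (1:ℝ)) x| ≤ (1:ℝ) := fun x => by norm_num
  have hharm1 : ∀ x : G,
      (fun _ : G => (1:ℝ)) x = ∑' g₁ : G, μ g₁ * (fun _ : G => (1:ℝ)) (x * g₁) := by
    intro x
    simp only
    rw [show (∑' g₁ : G, μ g₁ * (1:ℝ)) = ∑' g₁ : G, μ g₁ from
      tsum_congr fun g1 => mul_one _, hsum]
  have hmass : ∀ n : ℕ, (1:ℝ)
      = (∑ k ∈ Finset.range n, ∑' γ : Γ, stepHit μ Γ g (k+1) ↑γ)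
        + ∑' y : G, surv μ Γ g n y := by
    intro n
    have := decomp (Γ := Γ) hpos hsum hb1 hharm1 g n
    simpa only [mul_one] using this
  have hPnn : ∀ k : ℕ, 0 ≤ ∑' γ : Γ, stepHit μ Γ g (k+1) ↑γ :=
    fun k => tsum_nonneg fun γ => stepHit_nonneg (Γ := Γ) hpos g (k+1) ↑γ
  have hTnn : ∀ n : ℕ, 0 ≤ ∑' y : G, surv μ Γ g n y :=
    fun n => tsum_nonneg fun y => surv_nonneg (Γ := Γ) hpos g n y
  have hPble : ∀ n : ℕ,
      ∑ k ∈ Finset.range n, (∑' γ : Γ, stepHit μ Γ g (k+1) ↑γ) ≤ 1 := by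
    intro n
    have h1 := hmass n
    have h2 := hTnn n
    linarith
  have hPsum : Summable fun k : ℕ => ∑' γ : Γ, stepHit μ Γ g (k+1) ↑γ :=
    summable_of_sum_range_le hPnn hPble
  have hDfib : ∀ k : ℕ, Summable fun γ : Γ => stepHit μ Γ g (k+1) ↑γ :=
    fun k => (summable_stepHit (Γ := Γ) hpos hsum g (k+1)).comp_injective
      Subtype.coe_injective
  have hD : Summable fun p : ℕ × Γ => stepHit μ Γ g (p.1+1) ↑p.2 := by
    apply (summable_prod_of_nonneg
      (fun p : ℕ × ↥Γ => stepHit_nonneg (Γ := Γ) hpos g (p.1+1) (↑p.2 : G))).mpr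
    exact ⟨fun k => hDfib k, hPsum⟩
  have hDswap : Summable fun q : Γ × ℕ => stepHit μ Γ g (q.2+1) ↑q.1 :=
    hD.prod_symm.congr fun q => rfl
  have htsum1 : ∑' k : ℕ, (∑' γ : Γ, stepHit μ Γ g (k+1) ↑γ) = 1 := by
    calc ∑' k : ℕ, (∑' γ : Γ, stepHit μ Γ g (k+1) ↑γ)
        = ∑' p : ℕ × Γ, stepHit μ Γ g (p.1+1) ↑p.2 :=
          (tsum_prod_w hD (fun k => hD.prod_factor k)).symm
      _ = ∑' q : Γ × ℕ, stepHit μ Γ g (q.2+1) ↑q.1 :=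
          ((Equiv.prodComm (↥Γ) ℕ).tsum_eq
            (fun p : ℕ × ↥Γ => stepHit μ Γ g (p.1+1) ↑p.2)).symm
      _ = ∑' (γ : Γ) (k : ℕ), stepHit μ Γ g (k+1) ↑γ :=
          tsum_prod_w hDswap (fun γ => hDswap.prod_factor γ)
      _ = ∑' γ : Γ, hitProb μ Γ g ↑γ := tsum_congr fun γ => rfl
      _ = 1 := hrec g
  have hPpartial : Filter.Tendsto
      (fun n => ∑ k ∈ Finset.range n, ∑' γ : Γ, stepHit μ Γ g (k+1) ↑γ)
      Filter.atTop (nhds 1) := by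
    have := hPsum.hasSum.tendsto_sum_nat
    rwa [htsum1] at this
  have hTtend : Filter.Tendsto (fun n => ∑' y : G, surv μ Γ g n y)
      Filter.atTop (nhds 0) := by
    have heq : (fun n => ∑' y : G, surv μ Γ g n y)
        = fun n => 1 - ∑ k ∈ Finset.range n, ∑' γ : Γ, stepHit μ Γ g (k+1) ↑γ :=
      funext fun n => by have := hmass n; linarith
    rw [heq]
    have := hPpartial.const_sub 1
    simpa using this
  -- weighted double family
  have hDh : Summable fun p : ℕ × Γ => stepHit μ Γ g (p.1+1) ↑p.2 * h ↑p.2 := by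
    rw [← summable_abs_iff]
    apply Summable.of_nonneg_of_le (fun p => abs_nonneg _) (fun p => ?_)
      (hD.mul_right C)
    rw [abs_mul, abs_of_nonneg (stepHit_nonneg (Γ := Γ) hpos g (p.1+1) ↑p.2)]
    exact mul_le_mul_of_nonneg_left (hb ↑p.2)
      (stepHit_nonneg (Γ := Γ) hpos g (p.1+1) ↑p.2)
  have hDhswap : Summable fun q : Γ × ℕ => stepHit μ Γ g (q.2+1) ↑q.1 * h ↑q.1 :=
    hDh.prod_symm.congr fun q => rfl
  have hQhas : HasSum (fun k : ℕ => ∑' γ : Γ, stepHit μ Γ g (k+1) ↑γ * h ↑γ)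
      (∑' p : ℕ × Γ, stepHit μ Γ g (p.1+1) ↑p.2 * h ↑p.2) :=
    HasSum.prod_fiberwise hDh.hasSum (fun k => (hDh.prod_factor k).hasSum)
  have hGhas : HasSum (fun γ : Γ => ∑' k : ℕ, stepHit μ Γ g (k+1) ↑γ * h ↑γ)
      (∑' q : Γ × ℕ, stepHit μ Γ g (q.2+1) ↑q.1 * h ↑q.1) :=
    HasSum.prod_fiberwise hDhswap.hasSum (fun γ => (hDhswap.prod_factor γ).hasSum)
  have hswapeq : ∑' q : Γ × ℕ, stepHit μ Γ g (q.2+1) ↑q.1 * h ↑q.1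
      = ∑' p : ℕ × Γ, stepHit μ Γ g (p.1+1) ↑p.2 * h ↑p.2 :=
    (Equiv.prodComm (↥Γ) ℕ).tsum_eq
      (fun p : ℕ × ↥Γ => stepHit μ Γ g (p.1+1) ↑p.2 * h ↑p.2)
  have hfinal1 : ∑' γ : Γ, hitProb μ Γ g ↑γ * h ↑γ
      = ∑' p : ℕ × Γ, stepHit μ Γ g (p.1+1) ↑p.2 * h ↑p.2 := by
    rw [← hswapeq, ← hGhas.tsum_eq]
    refine tsum_congr fun γ => ?_
    exact (tsum_mul_right (f := fun k : ℕ => stepHit μ Γ g (k+1) ↑γ)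
      (a := h ↑γ)).symm
  -- remainder tends to zero
  have hRtend : Filter.Tendsto (fun n => ∑' y : G, surv μ Γ g n y * h y)
      Filter.atTop (nhds 0) := by
    have habs : ∀ n : ℕ, Summable fun y : G => |surv μ Γ g n y * h y| := by
      intro n
      apply Summable.of_nonneg_of_le (fun y => abs_nonneg _) (fun y => ?_)
        ((summable_surv (Γ := Γ) hpos hsum g n).mul_right C)
      rw [abs_mul, abs_of_nonneg (surv_nonneg (Γ := Γ) hpos g n y)]
      exact mul_le_mul_of_nonneg_left (hb y) (surv_nonneg (Γ := Γ) hpos g n y)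
    have hbound : ∀ n : ℕ, |∑' y : G, surv μ Γ g n y * h y|
        ≤ (∑' y : G, surv μ Γ g n y) * C := by
      intro n
      calc |∑' y : G, surv μ Γ g n y * h y|
          ≤ ∑' y : G, |surv μ Γ g n y * h y| := by
            have := norm_tsum_le_tsum_norm (f := fun y : G => surv μ Γ g n y * h y)
              (by simpa only [Real.norm_eq_abs] using habs n)
            simpa only [Real.norm_eq_abs] using this
        _ ≤ ∑' y : G, surv μ Γ g n y * C := by
            refine Summable.tsum_le_tsum (fun y => ?_) (habs n)
              ((summable_surv (Γ := Γ) hpos hsum g n).mul_right C)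
            rw [abs_mul, abs_of_nonneg (surv_nonneg (Γ := Γ) hpos g n y)]
            exact mul_le_mul_of_nonneg_left (hb y) (surv_nonneg (Γ := Γ) hpos g n y)
        _ = (∑' y : G, surv μ Γ g n y) * C :=
            Summable.tsum_mul_right _ (summable_surv (Γ := Γ) hpos hsum g n)
    have hup : Filter.Tendsto (fun n => (∑' y : G, surv μ Γ g n y) * C)
        Filter.atTop (nhds 0) := by
      have := hTtend.mul_const C
      simpa using this
    have habs0 : Filter.Tendsto (fun n => |∑' y : G, surv μ Γ g n y * h y|)
        Filter.atTop (nhds 0) :=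
      squeeze_zero (fun n => abs_nonneg _) hbound hup
    have hneg : Filter.Tendsto (fun n => -|∑' y : G, surv μ Γ g n y * h y|)
        Filter.atTop (nhds 0) := by
      have := habs0.neg
      simpa using this
    exact tendsto_of_tendsto_of_tendsto_of_le_of_le hneg habs0
      (fun n => neg_abs_le _) (fun n => le_abs_self _)
  -- conclusion
  have hdec : ∀ n : ℕ, h g
      = (∑ k ∈ Finset.range n, ∑' γ : Γ, stepHit μ Γ g (k+1) ↑γ * h ↑γ)
        + ∑' y : G, surv μ Γ g n y * h y :=
    fun n => decomp (Γ := Γ) hpos hsum hb hharm g n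
  have htend : Filter.Tendsto
      (fun n => (∑ k ∈ Finset.range n, ∑' γ : Γ, stepHit μ Γ g (k+1) ↑γ * h ↑γ)
        + ∑' y : G, surv μ Γ g n y * h y) Filter.atTop
      (nhds ((∑' p : ℕ × Γ, stepHit μ Γ g (p.1+1) ↑p.2 * h ↑p.2) + 0)) :=
    (hQhas.tendsto_sum_nat).add hRtend
  have hconst : (fun n : ℕ =>
      (∑ k ∈ Finset.range n, ∑' γ : Γ, stepHit μ Γ g (k+1) ↑γ * h ↑γ)
        + ∑' y : G, surv μ Γ g n y * h y) = fun _ => h g :=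
    funext fun n => (hdec n).symm
  rw [hconst] at htend
  have := tendsto_nhds_unique tendsto_const_nhds htend
  rw [this, add_zero, hfinal1]

end HEHA

/-- If `h` is a bounded `μ`-harmonic function on `G` and `Γ` is a `μ`-recurrent
subgroup, then `h(g) = ∑_{γ ∈ Γ} θ_g(γ) h(γ)` for every `g ∈ G`. -/
theorem harmonic_eq_hitting_average {G : Type*} [Group G] [Countable G]
    (μ : G → ℝ) (Γ : Subgroup G)
    (hpos : ∀ g, 0 ≤ μ g) (hsum : ∑' g, μ g = 1)
    (hgen : ∀ g : G, ∃ n : ℕ, 1 ≤ n ∧ ∃ w : Fin n → G,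
      (∀ i, 0 < μ (w i)) ∧ (List.ofFn w).prod = g)
    (hrec : ∀ x : G, ∑' γ : Γ, hitProb μ Γ x ↑γ = 1)
    (h : G → ℝ)
    (hbdd : ∃ C, ∀ g, |h g| ≤ C)
    (hharm : ∀ g : G, h g = ∑' g₁ : G, μ g₁ * h (g * g₁)) :
    ∀ g : G, h g = ∑' γ : Γ, hitProb μ Γ g ↑γ * h ↑γ :=
  HEHA.harmonic_eq_hitting_average' μ Γ hpos hsum hrec h hbdd hharm
end

section
/- Let G be a countable discrete group with generating probability measure μ, and Γ a μ-recurrent subgroup with hitting measure θ. The restriction map Ψ : h ↦ h|_Γ is an isometric bijection (with respect to sup norms) from the space of bounded μ-harmonic functions on G to the space of bounded θ-harmonic functions on Γ. -/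
open scoped Classical BigOperators

set_option linter.unusedSectionVars false
set_option maxHeartbeats 1000000

/-- A function `h` on a countable group `H` is bounded and `θ`-harmonic. -/
def IsBddHarmonic {H : Type*} [Group H] (θ : H → ℝ) (h : H → ℝ) : Prop :=
  (∃ C, ∀ g, |h g| ≤ C) ∧ ∀ g : H, h g = ∑' g₁ : H, θ g₁ * h (g * g₁)

namespace FurstRestr

open ENNReal

variable {G : Type*} [Group G] [Countable G]

noncomputable def m (μ : G → ℝ) (g : G) : ℝ≥0∞ := ENNReal.ofReal (μ g)

noncomputable def P (μ : G → ℝ) {n : ℕ} (w : Fin n → G) : ℝ≥0∞ := ∏ i, m μ (w i)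

def ACond (Γ : Subgroup G) (x : G) (n : ℕ) (w : Fin n → G) : Prop :=
  ∀ k, 1 ≤ k → k < n → x * ((List.ofFn w).take k).prod ∉ Γ

def SCond (Γ : Subgroup G) (x : G) (n : ℕ) (w : Fin n → G) (γ : G) : Prop :=
  ACond Γ x n w ∧ x * (List.ofFn w).prod = γ

def QCond (Γ : Subgroup G) (x : G) (n : ℕ) (w : Fin n → G) : Prop :=
  ∀ k, 1 ≤ k → k ≤ n → x * ((List.ofFn w).take k).prod ∉ Γ

noncomputable def SE (μ : G → ℝ) (Γ : Subgroup G) (x : G) (n : ℕ) (γ : G) : ℝ≥0∞ :=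
  ∑' w : Fin n → G, if SCond Γ x n w γ then P μ w else 0

noncomputable def AE (μ : G → ℝ) (Γ : Subgroup G) (u : G → ℝ≥0∞) (x : G) (n : ℕ) : ℝ≥0∞ :=
  ∑' w : Fin n → G, if QCond Γ x n w then P μ w * u (x * (List.ofFn w).prod) else 0

noncomputable def QE (μ : G → ℝ) (Γ : Subgroup G) (x : G) (n : ℕ) : ℝ≥0∞ :=
  AE μ Γ (fun _ => 1) x n

noncomputable def TE (μ : G → ℝ) (Γ : Subgroup G) (x γ : G) : ℝ≥0∞ :=
  ∑' n : ℕ, SE μ Γ x (n + 1) γ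

section basic

variable {μ : G → ℝ}

lemma summable_mu (hsum : ∑' g, μ g = 1) : Summable μ := by
  by_contra h
  rw [tsum_eq_zero_of_not_summable h] at hsum
  norm_num at hsum

lemma m_tsum_one (hpos : ∀ g, 0 ≤ μ g) (hsum : ∑' g, μ g = 1) : ∑' g, m μ g = 1 := by
  unfold m
  rw [← ENNReal.ofReal_tsum_of_nonneg hpos (summable_mu hsum), hsum, ENNReal.ofReal_one]

lemma P_tsum_one (hpos : ∀ g, 0 ≤ μ g) (hsum : ∑' g, μ g = 1) : ∀ n : ℕ, ∑' w : Fin n → G, P μ w = 1 := by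
  intro n
  induction n with
  | zero =>
      rw [tsum_eq_single (default : Fin 0 → G) (fun b hb => absurd (Subsingleton.elim b default) hb)]
      simp [P]
  | succ n ih =>
      rw [← (Fin.consEquiv (fun _ : Fin (n+1) => G)).tsum_eq (fun w => P μ w)]
      have : ∀ p : G × (Fin n → G), P μ ((Fin.consEquiv (fun _ : Fin (n+1) => G)) p) = m μ p.1 * P μ p.2 := by
        intro p
        simp [P, Fin.consEquiv, Fin.prod_univ_succ]
      simp_rw [this]
      rw [ENNReal.tsum_prod']
      simp_rw [ENNReal.tsum_mul_left, ih, mul_one]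
      exact m_tsum_one hpos hsum


lemma m_ne_top (μ : G → ℝ) (g : G) : m μ g ≠ ⊤ := ENNReal.ofReal_ne_top

lemma m_toReal {μ : G → ℝ} (hpos : ∀ g, 0 ≤ μ g) (g : G) : (m μ g).toReal = μ g :=
  ENNReal.toReal_ofReal (hpos g)

lemma P_ne_top {n : ℕ} (w : Fin n → G) : P μ w ≠ ⊤ := by
  unfold P
  exact (ENNReal.prod_lt_top (fun i _ => ENNReal.ofReal_lt_top)).ne

lemma stepHit_eq_toReal (hpos : ∀ g, 0 ≤ μ g) (Γ : Subgroup G) (x : G) (n : ℕ) (γ : G) :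
    stepHit μ Γ x n γ = (SE μ Γ x n γ).toReal := by
  unfold stepHit SE SCond ACond
  rw [ENNReal.tsum_toReal_eq]
  · apply tsum_congr
    intro w
    split_ifs with h
    · unfold P m
      rw [ENNReal.toReal_prod]
      exact Finset.prod_congr rfl fun i _ => (ENNReal.toReal_ofReal (hpos _)).symm
    · simp
  · intro w
    split
    · exact P_ne_top w
    · exact ENNReal.zero_ne_top


lemma SE_le_one (hpos : ∀ g, 0 ≤ μ g) (hsum : ∑' g, μ g = 1) (Γ : Subgroup G)
    (x : G) (n : ℕ) (γ : G) : SE μ Γ x n γ ≤ 1 := by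
  rw [← P_tsum_one hpos hsum n]
  exact ENNReal.tsum_le_tsum fun w => by split <;> simp

lemma SE_ne_top (hpos : ∀ g, 0 ≤ μ g) (hsum : ∑' g, μ g = 1) (Γ : Subgroup G)
    (x : G) (n : ℕ) (γ : G) : SE μ Γ x n γ ≠ ⊤ :=
  (lt_of_le_of_lt (SE_le_one hpos hsum Γ x n γ) ENNReal.one_lt_top).ne

lemma hitProb_eq_toReal (hpos : ∀ g, 0 ≤ μ g) (hsum : ∑' g, μ g = 1) (Γ : Subgroup G)
    (x γ : G) : hitProb μ Γ x γ = (TE μ Γ x γ).toReal := by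
  unfold hitProb TE
  rw [ENNReal.tsum_toReal_eq (fun n => SE_ne_top hpos hsum Γ x (n+1) γ)]
  exact tsum_congr fun n => stepHit_eq_toReal hpos Γ x (n+1) γ

lemma hitProb_nonneg (hpos : ∀ g, 0 ≤ μ g) (Γ : Subgroup G) (x γ : G) :
    0 ≤ hitProb μ Γ x γ := by
  apply tsum_nonneg
  intro n
  apply tsum_nonneg
  intro w
  split
  · exact Finset.prod_nonneg fun i _ => hpos _
  · exact le_refl 0

/-- summing an indicator over the subgroup -/
lemma tsum_subgroup_ite (Γ : Subgroup G) (y : G) (c : ℝ≥0∞) :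
    ∑' γ : Γ, (if y = ↑γ then c else 0) = if y ∈ Γ then c else 0 := by
  by_cases hy : y ∈ Γ
  · rw [if_pos hy, tsum_eq_single (⟨y, hy⟩ : Γ)]
    · simp
    · intro b hb
      rw [if_neg]
      intro h
      exact hb (by ext; simp [h])
  · rw [if_neg hy, ENNReal.tsum_eq_zero.mpr]
    intro γ
    rw [if_neg]
    intro h
    exact hy (h ▸ γ.2)

/-- regrouping a sum over paths according to the endpoint in `Γ` -/
lemma gammaFubini {α : Type*} [Countable α] (Γ : Subgroup G) (f : α → G) (c : α → ℝ≥0∞) :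
    ∑' γ : Γ, ∑' a, (if f a = ↑γ then c a else 0)
      = ∑' a, (if f a ∈ Γ then c a else 0) := by
  rw [ENNReal.tsum_comm]
  exact tsum_congr fun a => tsum_subgroup_ite Γ (f a) (c a)


def snocEquiv (n : ℕ) : ((Fin n → G) × G) ≃ (Fin (n + 1) → G) where
  toFun p := Fin.snoc p.1 p.2
  invFun w := (fun i => w i.castSucc, w (Fin.last n))
  left_inv p := by
    obtain ⟨v, g⟩ := p
    simp [Fin.snoc_castSucc, Fin.snoc_last]
  right_inv w := by
    funext i
    refine Fin.lastCases ?_ (fun j => ?_) i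
    · simp [Fin.snoc_last]
    · simp [Fin.snoc_castSucc]

lemma ofFn_snoc {n : ℕ} (v : Fin n → G) (g : G) :
    List.ofFn (Fin.snoc v g : Fin (n+1) → G) = List.ofFn v ++ [g] := by
  rw [List.ofFn_succ', List.concat_eq_append]
  congr 1
  · congr 1
    funext i
    simp
  · rw [Fin.snoc_last]

lemma take_ofFn_snoc {n k : ℕ} (v : Fin n → G) (g : G) (hk : k ≤ n) :
    (List.ofFn (Fin.snoc v g : Fin (n+1) → G)).take k = (List.ofFn v).take k := by
  rw [ofFn_snoc, List.take_append_of_le_length (by simp [hk])]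

lemma prod_ofFn_snoc {n : ℕ} (v : Fin n → G) (g : G) :
    (List.ofFn (Fin.snoc v g : Fin (n+1) → G)).prod = (List.ofFn v).prod * g := by
  rw [ofFn_snoc, List.prod_append, List.prod_singleton]

lemma take_ofFn_all {n : ℕ} (w : Fin n → G) : (List.ofFn w).take n = List.ofFn w :=
  List.take_of_length_le (by simp)

lemma P_snoc {n : ℕ} (v : Fin n → G) (g : G) :
    P μ (Fin.snoc v g : Fin (n+1) → G) = P μ v * m μ g := by
  unfold P
  rw [Fin.prod_univ_castSucc]
  simp [Fin.snoc_castSucc, Fin.snoc_last]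

lemma ACond_snoc (Γ : Subgroup G) {x : G} {n : ℕ} (v : Fin n → G) (g : G) :
    ACond Γ x (n+1) (Fin.snoc v g) ↔ QCond Γ x n v := by
  constructor
  · intro h k hk1 hk2
    have := h k hk1 (by omega)
    rwa [take_ofFn_snoc v g hk2] at this
  · intro h k hk1 hk2
    rw [take_ofFn_snoc v g (by omega)]
    exact h k hk1 (by omega)

lemma QCond_succ_iff (Γ : Subgroup G) {x : G} {n : ℕ} (w : Fin (n+1) → G) :
    QCond Γ x (n+1) w ↔ ACond Γ x (n+1) w ∧ x * (List.ofFn w).prod ∉ Γ := by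
  constructor
  · intro h
    refine ⟨fun k hk1 hk2 => h k hk1 (by omega), ?_⟩
    have := h (n+1) (by omega) (le_refl _)
    rwa [take_ofFn_all w] at this
  · rintro ⟨hA, hend⟩ k hk1 hk2
    rcases Nat.lt_or_ge k (n+1) with hk | hk
    · exact hA k hk1 hk
    · have : k = n + 1 := by omega
      subst this
      rwa [take_ofFn_all w]

lemma AE_zero (Γ : Subgroup G) (u : G → ℝ≥0∞) (x : G) : AE μ Γ u x 0 = u x := by
  unfold AE
  rw [tsum_eq_single (default : Fin 0 → G) (fun b hb => absurd (Subsingleton.elim b default) hb)]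
  rw [if_pos (show QCond Γ x 0 default from fun k hk1 hk2 => absurd (hk1.trans hk2) (by omega))]
  simp [P]

lemma AE_step (Γ : Subgroup G) (u : G → ℝ≥0∞)
    (hu : ∀ y, u y = ∑' g : G, m μ g * u (y * g)) (x : G) (n : ℕ) :
    AE μ Γ u x n = (∑' γ : Γ, SE μ Γ x (n+1) ↑γ * u ↑γ) + AE μ Γ u x (n+1) := by
  have key : AE μ Γ u x n
      = ∑' w' : Fin (n+1) → G,
          if ACond Γ x (n+1) w' then P μ w' * u (x * (List.ofFn w').prod) else 0 := by
    have e1 : ∀ w : Fin n → G,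
        (if QCond Γ x n w then P μ w * u (x * (List.ofFn w).prod) else 0)
          = ∑' g : G, (if QCond Γ x n w then
              P μ w * (m μ g * u (x * (List.ofFn w).prod * g)) else 0) := by
      intro w
      by_cases h : QCond Γ x n w
      · simp only [if_pos h]
        rw [hu (x * (List.ofFn w).prod), ENNReal.tsum_mul_left]
      · simp [if_neg h]
    calc AE μ Γ u x n
        = ∑' (w : Fin n → G) (g : G), (if QCond Γ x n w then
            P μ w * (m μ g * u (x * (List.ofFn w).prod * g)) else 0) := by
          unfold AE; exact tsum_congr e1
      _ = ∑' p : (Fin n → G) × G, (if QCond Γ x n p.1 then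
            P μ p.1 * (m μ p.2 * u (x * (List.ofFn p.1).prod * p.2)) else 0) :=
          (ENNReal.tsum_prod' (f := fun p : (Fin n → G) × G => if QCond Γ x n p.1 then
            P μ p.1 * (m μ p.2 * u (x * (List.ofFn p.1).prod * p.2)) else 0)).symm
      _ = ∑' w' : Fin (n+1) → G,
          if ACond Γ x (n+1) w' then P μ w' * u (x * (List.ofFn w').prod) else 0 := by
          rw [← (snocEquiv n).tsum_eq]
          apply tsum_congr
          rintro ⟨v, g⟩
          dsimp only
          show _ = (if ACond Γ x (n+1) (Fin.snoc v g) then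
              P μ (Fin.snoc v g : Fin (n+1) → G)
                * u (x * (List.ofFn (Fin.snoc v g : Fin (n+1) → G)).prod) else 0)
          rw [P_snoc, prod_ofFn_snoc, ACond_snoc Γ v g]
          by_cases h : QCond Γ x n v
          · rw [if_pos h, if_pos h, ← mul_assoc x, mul_assoc (P μ v)]
          · rw [if_neg h, if_neg h]
  rw [key]
  have split : ∀ w' : Fin (n+1) → G,
      (if ACond Γ x (n+1) w' then P μ w' * u (x * (List.ofFn w').prod) else 0)
        = (if x * (List.ofFn w').prod ∈ Γ then
            (if ACond Γ x (n+1) w' then P μ w' * u (x * (List.ofFn w').prod) else 0) else 0)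
          + (if QCond Γ x (n+1) w' then P μ w' * u (x * (List.ofFn w').prod) else 0) := by
    intro w'
    by_cases hA : ACond Γ x (n+1) w'
    · by_cases hm : x * (List.ofFn w').prod ∈ Γ
      · rw [if_pos hm, if_pos hA,
          if_neg (fun hq => ((QCond_succ_iff Γ w').mp hq).2 hm), add_zero]
      · rw [if_neg hm, if_pos hA, if_pos ((QCond_succ_iff Γ w').mpr ⟨hA, hm⟩), zero_add]
    · simp only [if_neg hA, ite_self,
        if_neg (show ¬ QCond Γ x (n+1) w' from fun hq => hA ((QCond_succ_iff Γ w').mp hq).1),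
        add_zero]
  rw [tsum_congr split, ENNReal.tsum_add]
  congr 1
  rw [← gammaFubini Γ (fun w' => x * (List.ofFn w').prod)
    (fun w' => if ACond Γ x (n+1) w' then P μ w' * u (x * (List.ofFn w').prod) else 0)]
  apply tsum_congr
  intro γ
  unfold SE
  rw [← ENNReal.tsum_mul_right]
  apply tsum_congr
  intro w'
  by_cases he : x * (List.ofFn w').prod = ↑γ
  · rw [if_pos he]
    by_cases hA : ACond Γ x (n+1) w'
    · rw [if_pos hA, if_pos (show SCond Γ x (n+1) w' ↑γ from ⟨hA, he⟩), he]
    · rw [if_neg hA, if_neg (show ¬ SCond Γ x (n+1) w' ↑γ from fun h => hA h.1), zero_mul]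
  · rw [if_neg he, if_neg (show ¬ SCond Γ x (n+1) w' ↑γ from fun h => he h.2), zero_mul]

lemma AE_repr (Γ : Subgroup G) (u : G → ℝ≥0∞)
    (hu : ∀ y, u y = ∑' g : G, m μ g * u (y * g)) (x : G) (N : ℕ) :
    u x = (∑ k ∈ Finset.range N, ∑' γ : Γ, SE μ Γ x (k+1) ↑γ * u ↑γ) + AE μ Γ u x N := by
  induction N with
  | zero => simp [AE_zero Γ u x]
  | succ N ih =>
      rw [ih, AE_step Γ u hu x N, Finset.sum_range_succ, add_assoc]

lemma AE_le_QE (Γ : Subgroup G) (u : G → ℝ≥0∞) {C : ℝ≥0∞} (hC : ∀ y, u y ≤ C)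
    (x : G) (n : ℕ) : AE μ Γ u x n ≤ C * QE μ Γ x n := by
  unfold QE AE
  rw [← ENNReal.tsum_mul_left]
  apply ENNReal.tsum_le_tsum
  intro w
  split
  · calc P μ w * u (x * (List.ofFn w).prod) ≤ P μ w * C := mul_le_mul_right (hC _) _
      _ = C * (P μ w * 1) := by ring
  · simp


lemma one_harmonic (hpos : ∀ g, 0 ≤ μ g) (hsum : ∑' g, μ g = 1) :
    ∀ y : G, (fun _ : G => (1:ℝ≥0∞)) y = ∑' g : G, m μ g * (fun _ : G => (1:ℝ≥0∞)) (y * g) := by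
  intro y
  simp [ENNReal.tsum_mul_right, m_tsum_one hpos hsum]

lemma mass_partition (hpos : ∀ g, 0 ≤ μ g) (hsum : ∑' g, μ g = 1) (Γ : Subgroup G)
    (x : G) (N : ℕ) :
    (∑ k ∈ Finset.range N, ∑' γ : Γ, SE μ Γ x (k+1) ↑γ) + QE μ Γ x N = 1 := by
  have h := (AE_repr Γ (fun _ => (1:ℝ≥0∞)) (one_harmonic hpos hsum) x N).symm
  simpa [mul_one, QE] using h

lemma tsum_SE_le_one (hpos : ∀ g, 0 ≤ μ g) (hsum : ∑' g, μ g = 1) (Γ : Subgroup G) (x : G) :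
    ∑' n : ℕ, ∑' γ : Γ, SE μ Γ x (n+1) ↑γ ≤ 1 := by
  rw [ENNReal.tsum_eq_iSup_nat]
  apply iSup_le
  intro N
  calc (∑ k ∈ Finset.range N, ∑' γ : Γ, SE μ Γ x (k+1) ↑γ)
      ≤ (∑ k ∈ Finset.range N, ∑' γ : Γ, SE μ Γ x (k+1) ↑γ) + QE μ Γ x N := le_self_add
    _ = 1 := mass_partition hpos hsum Γ x N

lemma TE_le_one (hpos : ∀ g, 0 ≤ μ g) (hsum : ∑' g, μ g = 1) (Γ : Subgroup G)
    (x : G) (γ : Γ) : TE μ Γ x ↑γ ≤ 1 := by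
  unfold TE
  calc ∑' n : ℕ, SE μ Γ x (n+1) ↑γ
      ≤ ∑' n : ℕ, ∑' γ' : Γ, SE μ Γ x (n+1) ↑γ' :=
        ENNReal.tsum_le_tsum fun n => ENNReal.le_tsum γ
    _ ≤ 1 := tsum_SE_le_one hpos hsum Γ x

lemma TE_ne_top (hpos : ∀ g, 0 ≤ μ g) (hsum : ∑' g, μ g = 1) (Γ : Subgroup G)
    (x : G) (γ : Γ) : TE μ Γ x ↑γ ≠ ⊤ :=
  (lt_of_le_of_lt (TE_le_one hpos hsum Γ x γ) ENNReal.one_lt_top).ne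

lemma tsum_TE_eq_one (hpos : ∀ g, 0 ≤ μ g) (hsum : ∑' g, μ g = 1) (Γ : Subgroup G)
    (hrec : ∀ x : G, ∑' γ : Γ, hitProb μ Γ x ↑γ = 1) (x : G) :
    ∑' γ : Γ, TE μ Γ x ↑γ = 1 := by
  have hf : ∑' γ : Γ, TE μ Γ x ↑γ = ∑' n : ℕ, ∑' γ : Γ, SE μ Γ x (n+1) ↑γ := by
    unfold TE
    exact ENNReal.tsum_comm
  rw [← ENNReal.toReal_eq_one_iff]
  rw [ENNReal.tsum_toReal_eq (fun γ => TE_ne_top hpos hsum Γ x γ)]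
  rw [← hrec x]
  exact tsum_congr fun γ => (hitProb_eq_toReal hpos hsum Γ x ↑γ).symm

lemma tsum_tsum_SE_eq_one (hpos : ∀ g, 0 ≤ μ g) (hsum : ∑' g, μ g = 1) (Γ : Subgroup G)
    (hrec : ∀ x : G, ∑' γ : Γ, hitProb μ Γ x ↑γ = 1) (x : G) :
    ∑' n : ℕ, ∑' γ : Γ, SE μ Γ x (n+1) ↑γ = 1 := by
  rw [← ENNReal.tsum_comm]
  exact tsum_TE_eq_one hpos hsum Γ hrec x

open Filter Topology in
lemma QE_tendsto_zero (hpos : ∀ g, 0 ≤ μ g) (hsum : ∑' g, μ g = 1) (Γ : Subgroup G)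
    (hrec : ∀ x : G, ∑' γ : Γ, hitProb μ Γ x ↑γ = 1) (x : G) :
    Tendsto (QE μ Γ x) atTop (𝓝 0) := by
  have hpart : ∀ N, QE μ Γ x N = 1 - ∑ k ∈ Finset.range N, ∑' γ : Γ, SE μ Γ x (k+1) ↑γ := by
    intro N
    apply ENNReal.eq_sub_of_add_eq
    · apply ne_of_lt
      apply lt_of_le_of_lt _ ENNReal.one_lt_top
      calc (∑ k ∈ Finset.range N, ∑' γ : Γ, SE μ Γ x (k+1) ↑γ)
          ≤ ∑' n : ℕ, ∑' γ : Γ, SE μ Γ x (n+1) ↑γ := ENNReal.sum_le_tsum _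
        _ ≤ 1 := tsum_SE_le_one hpos hsum Γ x
    · rw [add_comm]
      exact mass_partition hpos hsum Γ x N
  have hs : Tendsto (fun N => ∑ k ∈ Finset.range N, ∑' γ : Γ, SE μ Γ x (k+1) ↑γ)
      atTop (𝓝 1) := by
    have := ENNReal.tendsto_nat_tsum (fun n => ∑' γ : Γ, SE μ Γ x (n+1) ↑γ)
    rwa [tsum_tsum_SE_eq_one hpos hsum Γ hrec x] at this
  have h2 : Tendsto (fun N => 1 - ∑ k ∈ Finset.range N, ∑' γ : Γ, SE μ Γ x (k+1) ↑γ)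
      atTop (𝓝 (1 - 1)) :=
    ENNReal.Tendsto.sub tendsto_const_nhds hs (Or.inl ENNReal.one_ne_top)
  rw [tsub_self] at h2
  exact h2.congr fun N => (hpart N).symm

open Filter Topology in
lemma repr_E (hpos : ∀ g, 0 ≤ μ g) (hsum : ∑' g, μ g = 1) (Γ : Subgroup G)
    (hrec : ∀ x : G, ∑' γ : Γ, hitProb μ Γ x ↑γ = 1)
    (u : G → ℝ≥0∞) (hu : ∀ y, u y = ∑' g : G, m μ g * u (y * g))
    {C : ℝ≥0∞} (hCt : C ≠ ⊤) (hC : ∀ y, u y ≤ C) (x : G) :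
    u x = ∑' γ : Γ, TE μ Γ x ↑γ * u ↑γ := by
  have hL : Tendsto (fun N => ∑ k ∈ Finset.range N, ∑' γ : Γ, SE μ Γ x (k+1) ↑γ * u ↑γ)
      atTop (𝓝 (∑' n : ℕ, ∑' γ : Γ, SE μ Γ x (n+1) ↑γ * u ↑γ)) :=
    ENNReal.tendsto_nat_tsum _
  have hA : Tendsto (fun N => AE μ Γ u x N) atTop (𝓝 0) := by
    have hup : Tendsto (fun N => C * QE μ Γ x N) atTop (𝓝 (C * 0)) :=
      ENNReal.Tendsto.const_mul (QE_tendsto_zero hpos hsum Γ hrec x) (Or.inr hCt)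
    rw [mul_zero] at hup
    exact tendsto_of_tendsto_of_tendsto_of_le_of_le tendsto_const_nhds hup
      (fun N => zero_le) (fun N => AE_le_QE Γ u hC x N)
  have hcomb : Tendsto (fun N => (∑ k ∈ Finset.range N, ∑' γ : Γ, SE μ Γ x (k+1) ↑γ * u ↑γ)
      + AE μ Γ u x N) atTop
      (𝓝 ((∑' n : ℕ, ∑' γ : Γ, SE μ Γ x (n+1) ↑γ * u ↑γ) + 0)) := hL.add hA
  rw [add_zero] at hcomb
  have huxeq : u x = ∑' n : ℕ, ∑' γ : Γ, SE μ Γ x (n+1) ↑γ * u ↑γ :=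
    (tendsto_nhds_unique (hcomb.congr fun N => (AE_repr Γ u hu x N).symm)
      tendsto_const_nhds).symm
  rw [huxeq, ENNReal.tsum_comm]
  apply tsum_congr
  intro γ
  unfold TE
  exact ENNReal.tsum_mul_right


lemma summable_hitProb (Γ : Subgroup G)
    (hrec : ∀ x : G, ∑' γ : Γ, hitProb μ Γ x ↑γ = 1) (x : G) :
    Summable (fun γ : Γ => hitProb μ Γ x ↑γ) := by
  by_contra hns
  have := hrec x
  rw [tsum_eq_zero_of_not_summable hns] at this
  norm_num at this

lemma summable_hitProb_mul (hpos : ∀ g, 0 ≤ μ g) (Γ : Subgroup G)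
    (hrec : ∀ x : G, ∑' γ : Γ, hitProb μ Γ x ↑γ = 1) (x : G)
    (f : Γ → ℝ) {C : ℝ} (hC : ∀ γ, |f γ| ≤ C) :
    Summable (fun γ : Γ => hitProb μ Γ x ↑γ * f γ) := by
  refine Summable.of_abs (Summable.of_nonneg_of_le (fun γ => abs_nonneg _) (fun γ => ?_)
    ((summable_hitProb Γ hrec x).mul_right C))
  rw [abs_mul, abs_of_nonneg (hitProb_nonneg hpos Γ x ↑γ)]
  exact mul_le_mul_of_nonneg_left (hC γ) (hitProb_nonneg hpos Γ x ↑γ)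

/-- The real-valued Poisson-type representation of bounded harmonic functions via the
hitting measure on a recurrent subgroup. -/
lemma repr_R (hpos : ∀ g, 0 ≤ μ g) (hsum : ∑' g, μ g = 1) (Γ : Subgroup G)
    (hrec : ∀ x : G, ∑' γ : Γ, hitProb μ Γ x ↑γ = 1)
    (h : G → ℝ) {C : ℝ} (hC : ∀ g, |h g| ≤ C)
    (hharm : ∀ g : G, h g = ∑' g₁ : G, μ g₁ * h (g * g₁)) (x : G) :
    h x = ∑' γ : Γ, hitProb μ Γ x ↑γ * h ↑γ := by
  have hsummu : Summable μ := summable_mu hsum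
  have hC0 : 0 ≤ C := le_trans (abs_nonneg _) (hC 1)
  set u : G → ℝ≥0∞ := fun y => ENNReal.ofReal (C + h y) with hu_def
  have hCh : ∀ y, 0 ≤ C + h y := fun y => by
    have := (abs_le.mp (hC y)).1
    linarith
  have hub : ∀ y, u y ≤ ENNReal.ofReal (2*C) := fun y => ENNReal.ofReal_le_ofReal (by
    have := (abs_le.mp (hC y)).2
    linarith)
  have hmul_summ : ∀ y, Summable (fun g => μ g * h (y * g)) := by
    intro y
    refine Summable.of_abs (Summable.of_nonneg_of_le (fun g => abs_nonneg _) (fun g => ?_)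
      (hsummu.mul_right C))
    rw [abs_mul, abs_of_nonneg (hpos g)]
    exact mul_le_mul_of_nonneg_left (hC (y * g)) (hpos g)
  have hs2 : ∀ y, Summable (fun g => μ g * (C + h (y * g))) := by
    intro y
    have := (hsummu.mul_right C).add (hmul_summ y)
    simpa [mul_add] using this
  have huharm : ∀ y, u y = ∑' g : G, m μ g * u (y * g) := by
    intro y
    have hreal : C + h y = ∑' g : G, μ g * (C + h (y * g)) := by
      have h1 : ∑' g : G, μ g * (C + h (y * g))
          = ∑' g : G, (μ g * C + μ g * h (y * g)) := by
        apply tsum_congr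
        intro g
        ring
      rw [h1, Summable.tsum_add (hsummu.mul_right C) (hmul_summ y), tsum_mul_right, hsum, one_mul,
        ← hharm y]
    calc u y = ENNReal.ofReal (∑' g : G, μ g * (C + h (y * g))) := congrArg ENNReal.ofReal hreal
      _ = ∑' g : G, ENNReal.ofReal (μ g * (C + h (y * g))) :=
          ENNReal.ofReal_tsum_of_nonneg (fun g => mul_nonneg (hpos g) (hCh _)) (hs2 y)
      _ = ∑' g : G, m μ g * u (y * g) :=
          tsum_congr fun g => ENNReal.ofReal_mul (hpos g)
  have hrep := repr_E hpos hsum Γ hrec u huharm ENNReal.ofReal_ne_top hub x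
  have hterm : ∀ γ : Γ, (TE μ Γ x ↑γ * u ↑γ).toReal = hitProb μ Γ x ↑γ * (C + h ↑γ) := by
    intro γ
    rw [ENNReal.toReal_mul, ← hitProb_eq_toReal hpos hsum, hu_def,
      ENNReal.toReal_ofReal (hCh _)]
  have hCx : C + h x = ∑' γ : Γ, hitProb μ Γ x ↑γ * (C + h ↑γ) := by
    have h2 := congrArg ENNReal.toReal hrep
    rw [hu_def] at h2
    simp only at h2
    rw [ENNReal.toReal_ofReal (hCh x),
      ENNReal.tsum_toReal_eq (fun γ => ENNReal.mul_ne_top (TE_ne_top hpos hsum Γ x γ)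
        ENNReal.ofReal_ne_top)] at h2
    rw [h2]
    exact tsum_congr hterm
  have hsummθ := summable_hitProb Γ hrec x
  have hsummθh := summable_hitProb_mul hpos Γ hrec x (fun γ => h ↑γ) (fun γ => hC ↑γ)
  have hsplit : ∑' γ : Γ, hitProb μ Γ x ↑γ * (C + h ↑γ)
      = C + ∑' γ : Γ, hitProb μ Γ x ↑γ * h ↑γ := by
    have h1 : ∀ γ : Γ, hitProb μ Γ x ↑γ * (C + h ↑γ)
        = hitProb μ Γ x ↑γ * C + hitProb μ Γ x ↑γ * h ↑γ := fun γ => by ring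
    rw [tsum_congr h1, Summable.tsum_add (hsummθ.mul_right C) hsummθh, tsum_mul_right, hrec x, one_mul]
  rw [hsplit] at hCx
  linarith

lemma hitProb_smul (Γ : Subgroup G) {a : G} (ha : a ∈ Γ) (x γ : G) :
    hitProb μ Γ (a * x) (a * γ) = hitProb μ Γ x γ := by
  unfold hitProb stepHit
  apply tsum_congr
  intro n
  apply tsum_congr
  intro w
  refine if_congr (and_congr ?_ ?_) rfl rfl
  · constructor
    · intro hk k h1 h2
      have := hk k h1 h2
      rwa [mul_assoc, Γ.mul_mem_cancel_left ha] at this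
    · intro hk k h1 h2
      rw [mul_assoc, Γ.mul_mem_cancel_left ha]
      exact hk k h1 h2
  · rw [mul_assoc]
    exact mul_left_cancel_iff

lemma TE_smul (hpos : ∀ g, 0 ≤ μ g) (hsum : ∑' g, μ g = 1) (Γ : Subgroup G)
    {a : G} (ha : a ∈ Γ) (x : G) (γ : Γ) :
    TE μ Γ (a * x) (a * ↑γ) = TE μ Γ x ↑γ := by
  have h1 : (a * ↑γ : G) = ↑(⟨a, ha⟩ * γ : Γ) := rfl
  refine (ENNReal.toReal_eq_toReal_iff' ?_ ?_).mp ?_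
  · rw [h1]
    exact TE_ne_top hpos hsum Γ (a * x) _
  · exact TE_ne_top hpos hsum Γ x γ
  · rw [← hitProb_eq_toReal hpos hsum, ← hitProb_eq_toReal hpos hsum]
    exact hitProb_smul Γ ha x ↑γ


lemma ofFn_cons {n : ℕ} (g : G) (v : Fin n → G) :
    List.ofFn (Fin.cons g v : Fin (n+1) → G) = g :: List.ofFn v := by
  rw [List.ofFn_succ]
  simp

lemma P_cons {n : ℕ} (g : G) (v : Fin n → G) :
    P μ (Fin.cons g v : Fin (n+1) → G) = m μ g * P μ v := by
  unfold P
  simp [Fin.prod_univ_succ]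

lemma SE_one (Γ : Subgroup G) (x γ : G) :
    SE μ Γ x 1 γ = ∑' g : G, (if x * g = γ then m μ g else 0) := by
  unfold SE
  rw [← (Equiv.funUnique (Fin 1) G).symm.tsum_eq]
  apply tsum_congr
  intro g
  have h1 : List.ofFn ((Equiv.funUnique (Fin 1) G).symm g) = [g] := by
    simp [Equiv.funUnique]
  have h2 : P μ ((Equiv.funUnique (Fin 1) G).symm g) = m μ g := by
    unfold P
    simp [Equiv.funUnique, Fin.prod_univ_one]
  rw [h2]
  by_cases hx : x * g = γ
  · rw [if_pos, if_pos hx]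
    exact ⟨fun k h1 h2 => absurd (h1.trans_lt h2) (by omega), by simpa [h1] using hx⟩
  · rw [if_neg, if_neg hx]
    intro hs
    exact hx (by simpa [h1] using hs.2)

lemma SCond_cons (Γ : Subgroup G) {x γ : G} {n : ℕ} (g : G) (v : Fin (n+1) → G) :
    SCond Γ x (n+2) (Fin.cons g v) γ ↔ (x * g ∉ Γ ∧ SCond Γ (x * g) (n+1) v γ) := by
  unfold SCond ACond
  rw [ofFn_cons]
  constructor
  · rintro ⟨hA, hend⟩
    have h1 := hA 1 le_rfl (by omega)
    simp only [List.take_succ_cons, List.take_zero, List.prod_cons, List.prod_nil,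
      mul_one] at h1
    refine ⟨h1, fun k hk1 hk2 => ?_, ?_⟩
    · have := hA (k+1) (by omega) (by omega)
      rwa [List.take_succ_cons, List.prod_cons, ← mul_assoc] at this
    · rwa [List.prod_cons, ← mul_assoc] at hend
  · rintro ⟨hg, hA, hend⟩
    refine ⟨fun k hk1 hk2 => ?_, ?_⟩
    · rcases Nat.exists_eq_add_of_le hk1 with ⟨j, rfl⟩
      rcases Nat.eq_zero_or_pos j with hj | hj
      · subst hj
        simpa using hg
      · have := hA j hj (by omega)
        rw [show 1 + j = j + 1 from by omega, List.take_succ_cons, List.prod_cons,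
          ← mul_assoc]
        exact this
    · rw [List.prod_cons, ← mul_assoc]
      exact hend

lemma SE_succ_succ (Γ : Subgroup G) (x γ : G) (n : ℕ) :
    SE μ Γ x (n+2) γ = ∑' g : G, m μ g * (if x * g ∈ Γ then 0 else SE μ Γ (x * g) (n+1) γ) := by
  unfold SE
  rw [← (Fin.consEquiv (fun _ : Fin (n+2) => G)).tsum_eq]
  rw [ENNReal.tsum_prod' (f := fun p : G × (Fin (n+1) → G) =>
    if SCond Γ x (n+2) ((Fin.consEquiv (fun _ : Fin (n+2) => G)) (p.1, p.2)) γ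
      then P μ ((Fin.consEquiv (fun _ : Fin (n+2) => G)) (p.1, p.2)) else 0)]
  apply tsum_congr
  intro g
  have hce : ∀ v : Fin (n+1) → G,
      (Fin.consEquiv (fun _ : Fin (n+2) => G)) (g, v) = Fin.cons g v := fun v => rfl
  by_cases hg : x * g ∈ Γ
  · rw [if_pos hg, mul_zero]
    apply ENNReal.tsum_eq_zero.mpr
    intro v
    rw [hce v, if_neg]
    intro hs
    exact ((SCond_cons Γ g v).mp hs).1 hg
  · rw [if_neg hg, ← ENNReal.tsum_mul_left]
    apply tsum_congr
    intro v
    rw [hce v, P_cons]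
    by_cases hs : SCond Γ (x * g) (n+1) v γ
    · rw [if_pos ((SCond_cons Γ g v).mpr ⟨hg, hs⟩), if_pos hs]
    · rw [if_neg (fun hc => hs ((SCond_cons Γ g v).mp hc).2), if_neg hs, mul_zero]

lemma TE_first_step (Γ : Subgroup G) (x : G) (γ : Γ) :
    TE μ Γ x ↑γ = ∑' g : G, m μ g *
      (if x * g ∈ Γ then (if x * g = ↑γ then 1 else 0) else TE μ Γ (x * g) ↑γ) := by
  unfold TE
  rw [tsum_eq_zero_add' ENNReal.summable]
  rw [SE_one Γ x ↑γ]
  have h2 : ∑' n : ℕ, SE μ Γ x (n + 1 + 1) ↑γ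
      = ∑' g : G, m μ g * (if x * g ∈ Γ then 0 else TE μ Γ (x * g) ↑γ) := by
    calc ∑' n : ℕ, SE μ Γ x (n + 1 + 1) ↑γ
        = ∑' n : ℕ, ∑' g : G, m μ g * (if x * g ∈ Γ then 0 else SE μ Γ (x * g) (n+1) ↑γ) :=
          tsum_congr fun n => SE_succ_succ Γ x ↑γ n
      _ = ∑' g : G, ∑' n : ℕ, m μ g * (if x * g ∈ Γ then 0 else SE μ Γ (x * g) (n+1) ↑γ) :=
          ENNReal.tsum_comm
      _ = ∑' g : G, m μ g * (if x * g ∈ Γ then 0 else TE μ Γ (x * g) ↑γ) := by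
          apply tsum_congr
          intro g
          rw [ENNReal.tsum_mul_left]
          congr 1
          by_cases hg : x * g ∈ Γ
          · simp [hg]
          · simp only [if_neg hg]
            rfl
  rw [h2, ← ENNReal.tsum_add]
  apply tsum_congr
  intro g
  by_cases hg : x * g ∈ Γ
  · rw [if_pos hg, if_pos hg, mul_zero, add_zero]
    by_cases he : x * g = ↑γ
    · rw [if_pos he, if_pos he, mul_one]
    · rw [if_neg he, if_neg he, mul_zero]
  · rw [if_neg hg, if_neg hg]
    rw [if_neg (fun he : x * g = ↑γ => hg (he ▸ γ.2)), zero_add]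
    rfl


end basic

section parts

variable {μ : G → ℝ} (hpos : ∀ g, 0 ≤ μ g) (hsum : ∑' g, μ g = 1)
  (Γ : Subgroup G) (hrec : ∀ x : G, ∑' γ : Γ, hitProb μ Γ x ↑γ = 1)

include hpos hsum hrec

lemma part_one (h : G → ℝ) (hh : IsBddHarmonic μ h) :
    IsBddHarmonic (fun γ : Γ => hitProb μ Γ 1 ↑γ) (fun γ : Γ => h ↑γ) := by
  obtain ⟨⟨C, hC⟩, hharm⟩ := hh
  refine ⟨⟨C, fun γ => hC ↑γ⟩, ?_⟩
  intro γ₀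
  have hrepr := repr_R hpos hsum Γ hrec h hC hharm ↑γ₀
  rw [← (Equiv.mulLeft γ₀).tsum_eq (fun γ : Γ => hitProb μ Γ (↑γ₀) ↑γ * h ↑γ)] at hrepr
  show h ↑γ₀ = ∑' g₁ : Γ, hitProb μ Γ 1 ↑g₁ * h ↑(γ₀ * g₁)
  rw [hrepr]
  apply tsum_congr
  intro lam
  show hitProb μ Γ ↑γ₀ ↑(γ₀ * lam) * h ↑(γ₀ * lam) = hitProb μ Γ 1 ↑lam * h ↑(γ₀ * lam)
  congr 1
  calc hitProb μ Γ ↑γ₀ ↑(γ₀ * lam) = hitProb μ Γ (↑γ₀ * 1) (↑γ₀ * ↑lam) := by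
        rw [mul_one]
        rfl
    _ = hitProb μ Γ 1 ↑lam := hitProb_smul Γ γ₀.2 1 ↑lam

lemma part_two (h₁ h₂ : G → ℝ) (hh₁ : IsBddHarmonic μ h₁) (hh₂ : IsBddHarmonic μ h₂)
    (heq : ∀ γ : Γ, h₁ ↑γ = h₂ ↑γ) : h₁ = h₂ := by
  obtain ⟨⟨C₁, hC₁⟩, hharm₁⟩ := hh₁
  obtain ⟨⟨C₂, hC₂⟩, hharm₂⟩ := hh₂
  funext x
  rw [repr_R hpos hsum Γ hrec h₁ hC₁ hharm₁ x, repr_R hpos hsum Γ hrec h₂ hC₂ hharm₂ x]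
  exact tsum_congr fun γ => by rw [heq γ]

lemma part_four (h : G → ℝ) (hh : IsBddHarmonic μ h) :
    (⨆ g : G, |h g|) = ⨆ γ : Γ, |h ↑γ| := by
  obtain ⟨⟨C, hC⟩, hharm⟩ := hh
  have hbddG : BddAbove (Set.range fun g : G => |h g|) := ⟨C, by rintro _ ⟨g, rfl⟩; exact hC g⟩
  have hbddΓ : BddAbove (Set.range fun γ : Γ => |h ↑γ|) :=
    ⟨C, by rintro _ ⟨γ, rfl⟩; exact hC ↑γ⟩
  have hMΓ : ∀ γ : Γ, |h ↑γ| ≤ ⨆ γ : Γ, |h ↑γ| := fun γ => le_ciSup hbddΓ γ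
  have hMΓ0 : 0 ≤ ⨆ γ : Γ, |h ↑γ| := le_trans (abs_nonneg _) (hMΓ 1)
  apply le_antisymm
  · apply ciSup_le
    intro x
    rw [repr_R hpos hsum Γ hrec h hC hharm x]
    have hsummabs : Summable (fun γ : Γ => |hitProb μ Γ x ↑γ * h ↑γ|) :=
      (summable_hitProb_mul hpos Γ hrec x (fun γ => h ↑γ) (fun γ => hC ↑γ)).abs
    calc |∑' γ : Γ, hitProb μ Γ x ↑γ * h ↑γ|
        ≤ ∑' γ : Γ, |hitProb μ Γ x ↑γ * h ↑γ| := by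
          have := norm_tsum_le_tsum_norm
            (f := fun γ : Γ => hitProb μ Γ x ↑γ * h ↑γ)
            (by simpa only [Real.norm_eq_abs] using hsummabs)
          simpa only [Real.norm_eq_abs] using this
      _ ≤ ∑' γ : Γ, hitProb μ Γ x ↑γ * ⨆ γ : Γ, |h ↑γ| := by
          apply Summable.tsum_le_tsum _ hsummabs ((summable_hitProb Γ hrec x).mul_right _)
          intro γ
          rw [abs_mul, abs_of_nonneg (hitProb_nonneg hpos Γ x ↑γ)]
          exact mul_le_mul_of_nonneg_left (hMΓ γ) (hitProb_nonneg hpos Γ x ↑γ)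
      _ = ⨆ γ : Γ, |h ↑γ| := by rw [tsum_mul_right, hrec x, one_mul]
  · exact ciSup_le fun γ => le_ciSup hbddG (↑γ : G)

lemma part_three (h' : Γ → ℝ)
    (hh' : IsBddHarmonic (fun γ : Γ => hitProb μ Γ 1 ↑γ) h') :
    ∃ h : G → ℝ, IsBddHarmonic μ h ∧ ∀ γ : Γ, h ↑γ = h' γ := by
  obtain ⟨⟨C, hC⟩, hharm'⟩ := hh'
  have hsummu : Summable μ := summable_mu hsum
  have hC0 : 0 ≤ C := le_trans (abs_nonneg _) (hC 1)
  set v : Γ → ℝ≥0∞ := fun γ => ENNReal.ofReal (C + h' γ) with hv_def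
  have hCh : ∀ γ, 0 ≤ C + h' γ := fun γ => by
    have := (abs_le.mp (hC γ)).1
    linarith
  have hv_le : ∀ γ, v γ ≤ ENNReal.ofReal (2*C) := fun γ => ENNReal.ofReal_le_ofReal (by
    have := (abs_le.mp (hC γ)).2
    linarith)
  have hsummθ : Summable (fun γ : Γ => hitProb μ Γ 1 ↑γ) := summable_hitProb Γ hrec 1
  have hv_harm : ∀ γ₀ : Γ, v γ₀ = ∑' lam : Γ, TE μ Γ 1 ↑lam * v (γ₀ * lam) := by
    intro γ₀
    have hsummθh : Summable (fun lam : Γ => hitProb μ Γ 1 ↑lam * h' (γ₀ * lam)) :=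
      summable_hitProb_mul hpos Γ hrec 1 (fun lam => h' (γ₀ * lam)) (fun lam => hC _)
    have hreal : C + h' γ₀ = ∑' lam : Γ, hitProb μ Γ 1 ↑lam * (C + h' (γ₀ * lam)) := by
      have h1 : ∀ lam : Γ, hitProb μ Γ 1 ↑lam * (C + h' (γ₀ * lam))
          = hitProb μ Γ 1 ↑lam * C + hitProb μ Γ 1 ↑lam * h' (γ₀ * lam) := fun lam => by ring
      rw [tsum_congr h1, Summable.tsum_add (hsummθ.mul_right C) hsummθh, tsum_mul_right, hrec 1,
        one_mul, ← hharm' γ₀]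
    calc v γ₀ = ENNReal.ofReal (∑' lam : Γ, hitProb μ Γ 1 ↑lam * (C + h' (γ₀ * lam))) :=
          congrArg ENNReal.ofReal hreal
      _ = ∑' lam : Γ, ENNReal.ofReal (hitProb μ Γ 1 ↑lam * (C + h' (γ₀ * lam))) := by
          apply ENNReal.ofReal_tsum_of_nonneg
            (fun lam => mul_nonneg (hitProb_nonneg hpos Γ 1 _) (hCh _))
          have := (hsummθ.mul_right C).add hsummθh
          apply Summable.congr this
          intro lam
          ring
      _ = ∑' lam : Γ, TE μ Γ 1 ↑lam * v (γ₀ * lam) := by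
          apply tsum_congr
          intro lam
          rw [ENNReal.ofReal_mul (hitProb_nonneg hpos Γ 1 _)]
          congr 1
          rw [hitProb_eq_toReal hpos hsum Γ 1 ↑lam,
            ENNReal.ofReal_toReal (TE_ne_top hpos hsum Γ 1 lam)]
  set U : G → ℝ≥0∞ := fun y => ∑' γ : Γ, TE μ Γ y ↑γ * v γ with hU_def
  have hU_gamma : ∀ γ₀ : Γ, U ↑γ₀ = v γ₀ := by
    intro γ₀
    calc U ↑γ₀ = ∑' γ : Γ, TE μ Γ ↑γ₀ ↑γ * v γ := rfl
      _ = ∑' lam : Γ, TE μ Γ ↑γ₀ ↑(γ₀ * lam) * v (γ₀ * lam) :=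
          ((Equiv.mulLeft γ₀).tsum_eq (fun γ : Γ => TE μ Γ ↑γ₀ ↑γ * v γ)).symm
      _ = ∑' lam : Γ, TE μ Γ 1 ↑lam * v (γ₀ * lam) := by
          apply tsum_congr
          intro lam
          congr 1
          calc TE μ Γ ↑γ₀ ↑(γ₀ * lam) = TE μ Γ (↑γ₀ * 1) (↑γ₀ * ↑lam) := by
                rw [mul_one]
                rfl
            _ = TE μ Γ 1 ↑lam := TE_smul hpos hsum Γ γ₀.2 1 lam
      _ = v γ₀ := (hv_harm γ₀).symm
  have hU_le : ∀ y, U y ≤ ENNReal.ofReal (2*C) := by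
    intro y
    calc U y ≤ ∑' γ : Γ, TE μ Γ y ↑γ * ENNReal.ofReal (2*C) :=
          ENNReal.tsum_le_tsum fun γ => mul_le_mul_right (hv_le γ) _
      _ = ENNReal.ofReal (2*C) := by
          rw [ENNReal.tsum_mul_right, tsum_TE_eq_one hpos hsum Γ hrec y, one_mul]
  have hU_ne_top : ∀ y, U y ≠ ⊤ :=
    fun y => (lt_of_le_of_lt (hU_le y) ENNReal.ofReal_lt_top).ne
  have hU_harm : ∀ y, U y = ∑' g : G, m μ g * U (y * g) := by
    intro y
    calc U y = ∑' γ : Γ, (∑' g : G, m μ g *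
          (if y * g ∈ Γ then (if y * g = ↑γ then 1 else 0) else TE μ Γ (y * g) ↑γ)) * v γ :=
          tsum_congr fun γ => by rw [← TE_first_step Γ y γ]
      _ = ∑' γ : Γ, ∑' g : G, m μ g *
          (if y * g ∈ Γ then (if y * g = ↑γ then 1 else 0) else TE μ Γ (y * g) ↑γ) * v γ :=
          tsum_congr fun γ => ENNReal.tsum_mul_right.symm
      _ = ∑' g : G, ∑' γ : Γ, m μ g *
          (if y * g ∈ Γ then (if y * g = ↑γ then 1 else 0) else TE μ Γ (y * g) ↑γ) * v γ :=
          ENNReal.tsum_comm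
      _ = ∑' g : G, m μ g * U (y * g) := by
          apply tsum_congr
          intro g
          have hassoc : ∀ γ : Γ, m μ g *
              (if y * g ∈ Γ then (if y * g = ↑γ then 1 else 0) else TE μ Γ (y * g) ↑γ) * v γ
              = m μ g * ((if y * g ∈ Γ then (if y * g = ↑γ then 1 else 0)
                  else TE μ Γ (y * g) ↑γ) * v γ) := fun γ => mul_assoc _ _ _
          rw [tsum_congr hassoc, ENNReal.tsum_mul_left]
          congr 1
          by_cases hyg : y * g ∈ Γ
          · have hterm : ∀ γ : Γ,
                (if y * g ∈ Γ then (if y * g = ↑γ then 1 else 0) else TE μ Γ (y * g) ↑γ) * v γ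
                = (if y * g = ↑γ then v ⟨y * g, hyg⟩ else 0) := by
              intro γ
              rw [if_pos hyg]
              by_cases he : y * g = ↑γ
              · rw [if_pos he, if_pos he, one_mul]
                congr 1
                exact Subtype.ext he.symm
              · rw [if_neg he, if_neg he, zero_mul]
            rw [tsum_congr hterm, tsum_subgroup_ite Γ (y * g) _, if_pos hyg,
              ← hU_gamma ⟨y * g, hyg⟩]
          · have hterm : ∀ γ : Γ,
                (if y * g ∈ Γ then (if y * g = ↑γ then 1 else 0) else TE μ Γ (y * g) ↑γ) * v γ
                = TE μ Γ (y * g) ↑γ * v γ := fun γ => by rw [if_neg hyg]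
            rw [tsum_congr hterm]
  refine ⟨fun y => (U y).toReal - C, ⟨⟨C, ?_⟩, ?_⟩, ?_⟩
  · intro y
    show |(U y).toReal - C| ≤ C
    have h1 : (U y).toReal ≤ 2*C := ENNReal.toReal_le_of_le_ofReal (by linarith) (hU_le y)
    have h2 : 0 ≤ (U y).toReal := ENNReal.toReal_nonneg
    rw [abs_le]
    constructor <;> linarith
  · intro y
    show (U y).toReal - C = ∑' g : G, μ g * ((U (y * g)).toReal - C)
    have ht : (U y).toReal = ∑' g : G, μ g * (U (y * g)).toReal := by
      rw [hU_harm y, ENNReal.tsum_toReal_eq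
        (fun g => ENNReal.mul_ne_top (m_ne_top μ g) (hU_ne_top (y * g)))]
      apply tsum_congr
      intro g
      rw [ENNReal.toReal_mul, m_toReal hpos g]
    have hsumU : Summable (fun g => μ g * (U (y * g)).toReal) := by
      refine Summable.of_abs (Summable.of_nonneg_of_le (fun g => abs_nonneg _) (fun g => ?_)
        (hsummu.mul_right (2*C)))
      rw [abs_mul, abs_of_nonneg (hpos g), abs_of_nonneg ENNReal.toReal_nonneg]
      exact mul_le_mul_of_nonneg_left
        (ENNReal.toReal_le_of_le_ofReal (by linarith) (hU_le (y * g))) (hpos g)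
    have hsplit : ∑' g : G, μ g * ((U (y * g)).toReal - C)
        = (∑' g : G, μ g * (U (y * g)).toReal) - C := by
      have h1 : ∀ g : G, μ g * ((U (y * g)).toReal - C)
          = μ g * (U (y * g)).toReal - μ g * C := fun g => by ring
      rw [tsum_congr h1, Summable.tsum_sub hsumU (hsummu.mul_right C), tsum_mul_right, hsum, one_mul]
    rw [hsplit, ← ht]
  · intro γ
    show (U ↑γ).toReal - C = h' γ
    rw [hU_gamma γ]
    show (ENNReal.ofReal (C + h' γ)).toReal - C = h' γ
    rw [ENNReal.toReal_ofReal (hCh γ)]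
    ring

end parts

end FurstRestr

/-- **Furstenberg's restriction theorem.** The restriction map `Ψ : h ↦ h|Γ` is an
isometric (for sup norms) bijection from bounded `μ`-harmonic functions on `G` to
bounded `θ`-harmonic functions on `Γ`, `θ` being the hitting measure of `Γ`. -/
theorem restriction_isometric_bijection {G : Type*} [Group G] [Countable G]
    (μ : G → ℝ) (Γ : Subgroup G)
    (hpos : ∀ g, 0 ≤ μ g) (hsum : ∑' g, μ g = 1)
    (hgen : ∀ g : G, ∃ n : ℕ, 1 ≤ n ∧ ∃ w : Fin n → G,
      (∀ i, 0 < μ (w i)) ∧ (List.ofFn w).prod = g)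
    (hrec : ∀ x : G, ∑' γ : Γ, hitProb μ Γ x ↑γ = 1) :
    -- Ψ maps into bounded θ-harmonic functions on Γ
    (∀ h : G → ℝ, IsBddHarmonic μ h →
      IsBddHarmonic (fun γ : Γ => hitProb μ Γ 1 ↑γ) (fun γ : Γ => h ↑γ)) ∧
    -- Ψ is injective
    (∀ h₁ h₂ : G → ℝ, IsBddHarmonic μ h₁ → IsBddHarmonic μ h₂ →
      (∀ γ : Γ, h₁ ↑γ = h₂ ↑γ) → h₁ = h₂) ∧
    -- Ψ is surjective
    (∀ h' : Γ → ℝ, IsBddHarmonic (fun γ : Γ => hitProb μ Γ 1 ↑γ) h' →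
      ∃ h : G → ℝ, IsBddHarmonic μ h ∧ ∀ γ : Γ, h ↑γ = h' γ) ∧
    -- Ψ preserves the sup norm
    (∀ h : G → ℝ, IsBddHarmonic μ h → (⨆ g : G, |h g|) = ⨆ γ : Γ, |h ↑γ|) := by
    exact ⟨fun h hh => FurstRestr.part_one hpos hsum Γ hrec h hh,
    fun h₁ h₂ a b c => FurstRestr.part_two hpos hsum Γ hrec h₁ h₂ a b c,
    fun h' hh' => FurstRestr.part_three hpos hsum Γ hrec h' hh',
    fun h hh => FurstRestr.part_four hpos hsum Γ hrec h hh⟩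
end

section
/- Let (X,ν) be a (G,μ)-stationary space, and let Γ be a μ-recurrent subgroup of G with hitting measure θ. Then ν is also θ-stationary with respect to the restricted Γ-action: Σ_{γ ∈ Γ} θ(γ)·γν = ν. -/
open MeasureTheory
open scoped Classical BigOperators

/-- Convolution `μ * ν` of a probability measure on a countable group with a
measure on a `G`-space: `μ*ν = ∑_g μ(g)·gν`. -/
noncomputable def convMeasure {G X : Type*} [Group G] [MeasurableSpace X]
    [MulAction G X] (μ : G → ℝ) (ν : Measure X) : Measure X :=
  Measure.sum fun g : G => ENNReal.ofReal (μ g) • Measure.map (fun x => g • x) ν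

open Filter Topology
open scoped ENNReal

section Aux

variable {G : Type*} [Group G]

/-- Weight of a word. -/
noncomputable def eW (e : G → ℝ≥0∞) {n : ℕ} (w : Fin n → G) : ℝ≥0∞ := ∏ i, e (w i)

/-- First hit of `Γ` at exactly step `n`, landing at `γ`. -/
def HitAt (Γ : Subgroup G) (x : G) (n : ℕ) (w : Fin n → G) (γ : G) : Prop :=
  (∀ k, 1 ≤ k → k < n → x * ((List.ofFn w).take k).prod ∉ Γ) ∧
    x * (List.ofFn w).prod = γ

/-- No hit of `Γ` within the first `n` steps. -/
def NoHit (Γ : Subgroup G) (x : G) (n : ℕ) (w : Fin n → G) : Prop :=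
  ∀ k, 1 ≤ k → k ≤ n → x * ((List.ofFn w).take k).prod ∉ Γ

noncomputable def eStep (e : G → ℝ≥0∞) (Γ : Subgroup G) (x : G) (n : ℕ) (γ : G) : ℝ≥0∞ :=
  ∑' w : Fin n → G, if HitAt Γ x n w γ then eW e w else 0

lemma ofFn_init_append {N : ℕ} (w' : Fin (N + 1) → G) :
    List.ofFn w' = List.ofFn (Fin.init w') ++ [w' (Fin.last N)] := by
  rw [List.ofFn_succ']
  simp only [List.concat_eq_append]
  rfl

lemma take_ofFn_init {N : ℕ} (w' : Fin (N + 1) → G) {k : ℕ} (hk : k ≤ N) :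
    (List.ofFn w').take k = (List.ofFn (Fin.init w')).take k := by
  rw [ofFn_init_append, List.take_append_of_le_length (by simpa using hk)]

lemma prod_ofFn_init {N : ℕ} (w' : Fin (N + 1) → G) :
    (List.ofFn w').prod = (List.ofFn (Fin.init w')).prod * w' (Fin.last N) := by
  rw [ofFn_init_append]; simp

lemma eW_init (e : G → ℝ≥0∞) {N : ℕ} (w' : Fin (N + 1) → G) :
    eW e w' = eW e (Fin.init w') * e (w' (Fin.last N)) := by
  rw [eW, Fin.prod_univ_castSucc]; rfl

lemma noHit_succ_iff {Γ : Subgroup G} {x : G} {N : ℕ} (w' : Fin (N + 1) → G) :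
    NoHit Γ x (N + 1) w' ↔
      NoHit Γ x N (Fin.init w') ∧ x * (List.ofFn w').prod ∉ Γ := by
  constructor
  · intro hn
    refine ⟨fun k hk1 hk2 => ?_, ?_⟩
    · have := hn k hk1 (hk2.trans (Nat.le_succ N))
      rwa [take_ofFn_init w' hk2] at this
    · have := hn (N + 1) (by omega) le_rfl
      rwa [List.take_of_length_le (by simp)] at this
  · rintro ⟨h1, h2⟩ k hk1 hk2
    rcases Nat.lt_or_ge k (N + 1) with hlt | hge
    · have hkN : k ≤ N := by omega
      rw [take_ofFn_init w' hkN]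
      exact h1 k hk1 hkN
    · have : k = N + 1 := by omega
      subst this
      rwa [List.take_of_length_le (by simp)]

lemma hitAt_succ_iff {Γ : Subgroup G} {x : G} {N : ℕ} (w' : Fin (N + 1) → G) (γ : G) :
    HitAt Γ x (N + 1) w' γ ↔
      NoHit Γ x N (Fin.init w') ∧ x * (List.ofFn w').prod = γ := by
  unfold HitAt NoHit
  constructor
  · rintro ⟨h1, h2⟩
    exact ⟨fun k hk1 hk2 => by
      rw [← take_ofFn_init w' hk2]; exact h1 k hk1 (by omega), h2⟩
  · rintro ⟨h1, h2⟩
    exact ⟨fun k hk1 hk2 => by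
      rw [take_ofFn_init w' (by omega)]; exact h1 k hk1 (by omega), h2⟩

variable [Countable G]

lemma sumW (e : G → ℝ≥0∞) (he : ∑' g, e g = 1) :
    ∀ n : ℕ, ∑' w : Fin n → G, eW e w = 1 := by
  intro n
  induction n with
  | zero =>
    rw [tsum_eq_single (fun i : Fin 0 => i.elim0)
      (fun w' hw' => absurd (Subsingleton.elim w' _) hw')]
    simp [eW]
  | succ N IH =>
    rw [← Equiv.tsum_eq (Fin.snocEquiv fun _ => G) (eW e)]
    have : ∀ p : G × (Fin N → G),
        eW e (Fin.snocEquiv (fun _ => G) p) = eW e p.2 * e p.1 := by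
      rintro ⟨g, w⟩
      rw [eW_init]
      simp [Fin.snocEquiv]
    rw [tsum_congr this, ENNReal.tsum_prod']
    calc (∑' (g : G) (w : Fin N → G), eW e ((g, w) : G × (Fin N → G)).2 * e ((g, w) : G × (Fin N → G)).1)
        = ∑' g : G, (∑' w : Fin N → G, eW e w) * e g := by
          exact tsum_congr fun g => by simpa using (ENNReal.tsum_mul_right (f := fun w : Fin N → G => eW e w) (a := e g))
      _ = 1 := by rw [IH]; simpa using he

end Aux

section Master

variable {G : Type*} [Group G] [Countable G]

set_option maxHeartbeats 1000000 in
lemma master (e : G → ℝ≥0∞) (Γ : Subgroup G) (h : G → ℝ≥0∞)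
    (hh : ∀ y, h y = ∑' g, e g * h (y * g)) (N : ℕ) (x : G) :
    h x = (∑' γ : Γ, (∑ n ∈ Finset.range N, eStep e Γ x (n + 1) ↑γ) * h ↑γ)
      + ∑' w : Fin N → G,
          (if NoHit Γ x N w then eW e w else 0) * h (x * (List.ofFn w).prod) := by
  induction N with
  | zero =>
    simp only [Finset.range_zero, Finset.sum_empty, zero_mul, tsum_zero, zero_add]
    rw [tsum_eq_single (fun i : Fin 0 => i.elim0)
      (fun w' hw' => absurd (Subsingleton.elim w' _) hw')]
    have h0 : NoHit Γ x 0 (fun i : Fin 0 => i.elim0) := fun k hk1 hk2 => by omega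
    simp [h0, eW]
  | succ N IH =>
    -- rewrite the remainder term of `IH`
    have key : (∑' w : Fin N → G,
          (if NoHit Γ x N w then eW e w else 0) * h (x * (List.ofFn w).prod))
        = (∑' γ : Γ, eStep e Γ x (N + 1) ↑γ * h ↑γ)
          + ∑' w' : Fin (N + 1) → G,
              (if NoHit Γ x (N + 1) w' then eW e w' else 0) * h (x * (List.ofFn w').prod) := by
      have step1 : (∑' w : Fin N → G,
            (if NoHit Γ x N w then eW e w else 0) * h (x * (List.ofFn w).prod))
          = ∑' (w : Fin N → G) (g : G),
              (if NoHit Γ x N w then eW e w else 0) * (e g * h (x * (List.ofFn w).prod * g)) := by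
        refine tsum_congr fun w => ?_
        rw [hh (x * (List.ofFn w).prod), ← ENNReal.tsum_mul_left]
      -- reindex over words of length N+1
      let F : (Fin (N + 1) → G) → ℝ≥0∞ := fun w' =>
        (if NoHit Γ x N (Fin.init w') then eW e (Fin.init w') else 0)
          * (e (w' (Fin.last N)) * h (x * (List.ofFn w').prod))
      have step2 : (∑' (w : Fin N → G) (g : G),
            (if NoHit Γ x N w then eW e w else 0) * (e g * h (x * (List.ofFn w).prod * g)))
          = ∑' w' : Fin (N + 1) → G, F w' := by
        rw [ENNReal.tsum_comm, ← Equiv.tsum_eq (Fin.snocEquiv fun _ => G) F,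
          ENNReal.tsum_prod']
        refine tsum_congr fun g => tsum_congr fun w => ?_
        have h1 : Fin.init ((Fin.snocEquiv fun _ => G) (g, w)) = w := by
          simp [Fin.snocEquiv]
        have h2 : ((Fin.snocEquiv fun _ => G) (g, w)) (Fin.last N) = g := by
          simp [Fin.snocEquiv]
        have h3 : (List.ofFn ((Fin.snocEquiv fun _ => G) (g, w))).prod
            = (List.ofFn w).prod * g := by
          rw [prod_ofFn_init, h1, h2]
        show _ = (if NoHit Γ x N (Fin.init ((Fin.snocEquiv fun _ => G) (g, w))) then
            eW e (Fin.init ((Fin.snocEquiv fun _ => G) (g, w))) else 0)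
          * (e ((Fin.snocEquiv fun _ => G) (g, w) (Fin.last N))
            * h (x * (List.ofFn ((Fin.snocEquiv fun _ => G) (g, w))).prod))
        rw [h1, h2, h3, ← mul_assoc x (List.ofFn w).prod g]
      -- pointwise split into "hit now" and "continue"
      have step3 : ∀ w' : Fin (N + 1) → G,
          (if NoHit Γ x N (Fin.init w') then eW e (Fin.init w') else 0)
            * (e (w' (Fin.last N)) * h (x * (List.ofFn w').prod)) = (∑' γ : Γ, if HitAt Γ x (N + 1) w' ↑γ then eW e w' * h ↑γ else 0)
            + (if NoHit Γ x (N + 1) w' then eW e w' else 0) * h (x * (List.ofFn w').prod) := by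
        intro w'
        by_cases h1 : NoHit Γ x N (Fin.init w')
        · by_cases h2 : x * (List.ofFn w').prod ∈ Γ
          · have hno : ¬ NoHit Γ x (N + 1) w' := by
              rw [noHit_succ_iff]; tauto
            have hsingle : (∑' γ : Γ, if HitAt Γ x (N + 1) w' ↑γ then eW e w' * h ↑γ else 0)
                = eW e w' * h (x * (List.ofFn w').prod) := by
              rw [tsum_eq_single (⟨x * (List.ofFn w').prod, h2⟩ : Γ)]
              · rw [if_pos]
                rw [hitAt_succ_iff]
                exact ⟨h1, rfl⟩
              · intro γ hγ
                rw [if_neg]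
                rw [hitAt_succ_iff]
                rintro ⟨-, hEq⟩
                exact hγ (Subtype.ext hEq.symm)
            rw [hsingle, if_neg hno, zero_mul, add_zero, if_pos h1, eW_init]
            ring
          · have hyes : NoHit Γ x (N + 1) w' := by
              rw [noHit_succ_iff]; exact ⟨h1, h2⟩
            have hzero : (∑' γ : Γ, if HitAt Γ x (N + 1) w' ↑γ then eW e w' * h ↑γ else 0)
                = 0 := by
              refine ENNReal.tsum_eq_zero.mpr fun γ => ?_
              rw [if_neg]
              rw [hitAt_succ_iff]
              rintro ⟨-, hEq⟩
              exact h2 (hEq ▸ γ.2)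
            rw [hzero, if_pos hyes, zero_add, if_pos h1, eW_init]
            ring
        · have hno : ¬ NoHit Γ x (N + 1) w' := by
            rw [noHit_succ_iff]; tauto
          have hzero : (∑' γ : Γ, if HitAt Γ x (N + 1) w' ↑γ then eW e w' * h ↑γ else 0)
              = 0 := by
            refine ENNReal.tsum_eq_zero.mpr fun γ => ?_
            rw [if_neg]
            rw [hitAt_succ_iff]
            tauto
          rw [hzero, if_neg hno, if_neg h1]
          simp
      have step4 : (∑' w' : Fin (N + 1) → G, F w')
          = (∑' γ : Γ, eStep e Γ x (N + 1) ↑γ * h ↑γ)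
            + ∑' w' : Fin (N + 1) → G,
                (if NoHit Γ x (N + 1) w' then eW e w' else 0) * h (x * (List.ofFn w').prod) := by
        rw [tsum_congr step3, ENNReal.tsum_add]
        congr 1
        rw [ENNReal.tsum_comm]
        refine tsum_congr fun γ => ?_
        rw [eStep, ← ENNReal.tsum_mul_right]
        refine tsum_congr fun w' => ?_
        rw [ite_mul, zero_mul]
      rw [step1, step2, step4]
    rw [IH, key, ← add_assoc, ← ENNReal.tsum_add]
    congr 1
    refine tsum_congr fun γ => ?_
    rw [Finset.sum_range_succ, add_mul]

end Master

section Limit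

variable {G : Type*} [Group G] [Countable G]

lemma tsum_tsum_eq_iSup {α : Type*} (f : α → ℕ → ℝ≥0∞) :
    ∑' a, ∑' n, f a n = ⨆ N, ∑' a, ∑ n ∈ Finset.range N, f a n := by
  rw [ENNReal.tsum_comm, ENNReal.tsum_eq_iSup_nat]
  exact iSup_congr fun N => (Summable.tsum_finsetSum fun i _ => ENNReal.summable).symm

lemma hit_expansion (e : G → ℝ≥0∞) (he : ∑' g, e g = 1) (Γ : Subgroup G)
    (h : G → ℝ≥0∞) (hh : ∀ y, h y = ∑' g, e g * h (y * g)) (hb : ∀ y, h y ≤ 1)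
    (x : G) (hrec1 : ∑' γ : Γ, (∑' n : ℕ, eStep e Γ x (n + 1) ↑γ) = 1) :
    h x = ∑' γ : Γ, (∑' n : ℕ, eStep e Γ x (n + 1) ↑γ) * h ↑γ := by
  set S : ℕ → ℝ≥0∞ := fun N => ∑' γ : Γ, ∑ n ∈ Finset.range N, eStep e Γ x (n + 1) ↑γ with hS
  set T : ℕ → ℝ≥0∞ := fun N =>
    ∑' γ : Γ, (∑ n ∈ Finset.range N, eStep e Γ x (n + 1) ↑γ) * h ↑γ with hT
  set R : ℕ → ℝ≥0∞ := fun N => ∑' w : Fin N → G,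
    (if NoHit Γ x N w then eW e w else 0) * h (x * (List.ofFn w).prod) with hR
  set r : ℕ → ℝ≥0∞ := fun N => ∑' w : Fin N → G,
    (if NoHit Γ x N w then eW e w else 0) with hr
  have hone : ∀ y : G, (fun _ : G => (1 : ℝ≥0∞)) y = ∑' g, e g * (fun _ : G => (1 : ℝ≥0∞)) (y * g) := by
    intro y; simp [he]
  have hmaster : ∀ N, h x = T N + R N := fun N => master e Γ h hh N x
  have hmaster1 : ∀ N, 1 = S N + r N := by
    intro N
    have := master e Γ (fun _ => (1 : ℝ≥0∞)) hone N x
    simpa using this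
  have hmonoS : Monotone S := by
    intro N M hNM
    exact ENNReal.tsum_le_tsum fun γ =>
      Finset.sum_le_sum_of_subset (Finset.range_subset_range.mpr hNM)
  have hmonoT : Monotone T := by
    intro N M hNM
    exact ENNReal.tsum_le_tsum fun γ =>
      mul_le_mul_left (Finset.sum_le_sum_of_subset (Finset.range_subset_range.mpr hNM)) _
  have hSsup : (⨆ N, S N) = 1 := by
    rw [hS]
    rw [← tsum_tsum_eq_iSup fun (γ : Γ) n => eStep e Γ x (n + 1) ↑γ]
    exact hrec1
  have hTsup : (⨆ N, T N) = ∑' γ : Γ, (∑' n : ℕ, eStep e Γ x (n + 1) ↑γ) * h ↑γ := by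
    have h1 : ∀ γ : Γ, (∑' n : ℕ, eStep e Γ x (n + 1) ↑γ) * h ↑γ
        = ∑' n : ℕ, eStep e Γ x (n + 1) ↑γ * h ↑γ := fun γ =>
      (ENNReal.tsum_mul_right).symm
    rw [tsum_congr h1, tsum_tsum_eq_iSup fun (γ : Γ) n => eStep e Γ x (n + 1) ↑γ * h ↑γ]
    refine iSup_congr fun N => tsum_congr fun γ => ?_
    exact Finset.sum_mul _ _ _
  have hSle : ∀ N, S N ≤ 1 := fun N => by
    rw [hmaster1 N]; exact le_self_add
  have hrS : ∀ N, r N = 1 - S N := fun N => by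
    refine ENNReal.eq_sub_of_add_eq (ne_top_of_le_ne_top ENNReal.one_ne_top (hSle N)) ?_
    rw [add_comm]; exact (hmaster1 N).symm
  have hSlim : Tendsto S atTop (𝓝 1) := by
    rw [← hSsup]; exact tendsto_atTop_iSup hmonoS
  have hrlim : Tendsto r atTop (𝓝 0) := by
    have : Tendsto (fun N => 1 - S N) atTop (𝓝 (1 - 1)) :=
      ENNReal.Tendsto.sub tendsto_const_nhds hSlim (Or.inl ENNReal.one_ne_top)
    simp only [tsub_self] at this
    exact this.congr fun N => (hrS N).symm
  have hRler : ∀ N, R N ≤ r N := by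
    intro N
    refine ENNReal.tsum_le_tsum fun w => ?_
    calc (if NoHit Γ x N w then eW e w else 0) * h (x * (List.ofFn w).prod)
        ≤ (if NoHit Γ x N w then eW e w else 0) * 1 := mul_le_mul_right (hb _) _
      _ = _ := mul_one _
  have hRlim : Tendsto R atTop (𝓝 0) :=
    tendsto_of_tendsto_of_tendsto_of_le_of_le tendsto_const_nhds hrlim
      (fun N => zero_le) hRler
  have hTlim : Tendsto T atTop (𝓝 (⨆ N, T N)) := tendsto_atTop_iSup hmonoT
  have hsum : Tendsto (fun N => T N + R N) atTop (𝓝 ((⨆ N, T N) + 0)) :=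
    hTlim.add hRlim
  have hconst : Tendsto (fun N => T N + R N) atTop (𝓝 (h x)) := by
    have : (fun N => T N + R N) = fun _ => h x := funext fun N => (hmaster N).symm
    rw [this]; exact tendsto_const_nhds
  have := tendsto_nhds_unique hconst hsum
  rw [this, add_zero, hTsup]

end Limit

/-- If `(X,ν)` is `(G,μ)`-stationary and `Γ` is a `μ`-recurrent subgroup with
hitting measure `θ`, then `ν` is `θ`-stationary for the restricted `Γ`-action:
`∑_{γ ∈ Γ} θ(γ)·γν = ν`. -/
theorem stationary_for_induced_action {G X : Type*} [Group G] [Countable G]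
    [MeasurableSpace X] [MulAction G X]
    (hmeas : ∀ g : G, Measurable fun x : X => g • x)
    (μ : G → ℝ) (hpos : ∀ g, 0 ≤ μ g) (hsum : ∑' g, μ g = 1)
    (hgen : ∀ g : G, ∃ n : ℕ, 1 ≤ n ∧ ∃ w : Fin n → G,
      (∀ i, 0 < μ (w i)) ∧ (List.ofFn w).prod = g)
    (Γ : Subgroup G)
    (hrec : ∀ x : G, ∑' γ : Γ, hitProb μ Γ x ↑γ = 1)
    (ν : Measure X) [IsProbabilityMeasure ν]
    (hstat : convMeasure μ ν = ν) :
    (Measure.sum fun γ : Γ =>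
        ENNReal.ofReal (hitProb μ Γ 1 ↑γ) • Measure.map (fun x => (γ : G) • x) ν) = ν := by
  set e : G → ℝ≥0∞ := fun g => ENNReal.ofReal (μ g) with he_def
  have hμsum : Summable μ := by
    by_contra hc
    rw [tsum_eq_zero_of_not_summable hc] at hsum
    exact one_ne_zero hsum.symm
  have he1 : ∑' g, e g = 1 := by
    rw [he_def, ← ENNReal.ofReal_tsum_of_nonneg hpos hμsum, hsum, ENNReal.ofReal_one]
  have hW1 := sumW e he1
  have hWtoReal : ∀ (n : ℕ) (w : Fin n → G), (eW e w).toReal = ∏ i, μ (w i) := by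
    intro n w
    rw [eW, ENNReal.toReal_prod]
    exact Finset.prod_congr rfl fun i _ => ENNReal.toReal_ofReal (hpos _)
  have hWsummable : ∀ n : ℕ, Summable (fun w : Fin n → G => ∏ i, μ (w i)) := by
    intro n
    have h1 : (∑' w : Fin n → G, eW e w) ≠ ∞ := by rw [hW1]; exact ENNReal.one_ne_top
    exact (ENNReal.summable_toReal h1).congr fun w => hWtoReal n w
  -- stepHit vs eStep
  have hstep_eq : ∀ (x : G) (n : ℕ) (γ : G),
      ENNReal.ofReal (stepHit μ Γ x n γ) = eStep e Γ x n γ := by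
    intro x n γ
    have hnonneg : ∀ w : Fin n → G,
        0 ≤ if HitAt Γ x n w γ then ∏ i, μ (w i) else 0 := by
      intro w
      split_ifs
      · exact Finset.prod_nonneg fun i _ => hpos _
      · exact le_rfl
    have hsummable : Summable (fun w : Fin n → G =>
        if HitAt Γ x n w γ then ∏ i, μ (w i) else 0) := by
      refine Summable.of_nonneg_of_le hnonneg (fun w => ?_) (hWsummable n)
      split_ifs
      · exact le_rfl
      · exact Finset.prod_nonneg fun i _ => hpos _
    have hcond : stepHit μ Γ x n γ
        = ∑' w : Fin n → G, if HitAt Γ x n w γ then ∏ i, μ (w i) else 0 := by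
      rw [stepHit]
      refine tsum_congr fun w => ?_
      simp only [HitAt]
      congr
    rw [hcond, ENNReal.ofReal_tsum_of_nonneg hnonneg hsummable, eStep]
    refine tsum_congr fun w => ?_
    rw [apply_ite ENNReal.ofReal, ENNReal.ofReal_zero,
      ENNReal.ofReal_prod_of_nonneg fun i _ => hpos _]
    rfl
  -- bounds coming from the master identity with h ≡ 1
  have hone : ∀ y : G, (fun _ : G => (1 : ℝ≥0∞)) y
      = ∑' g, e g * (fun _ : G => (1 : ℝ≥0∞)) (y * g) := by
    intro y; simp [he1]
  have hSle : ∀ N : ℕ,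
      (∑' γ : Γ, ∑ n ∈ Finset.range N, eStep e Γ (1 : G) (n + 1) ↑γ) ≤ 1 := by
    intro N
    have h1 := master e Γ (fun _ => (1 : ℝ≥0∞)) hone N 1
    simp only [mul_one] at h1
    rw [h1]
    exact le_self_add
  have hHit_le : ∀ γ : Γ, (∑' n : ℕ, eStep e Γ (1 : G) (n + 1) ↑γ) ≤ 1 := by
    intro γ
    rw [ENNReal.tsum_eq_iSup_nat]
    exact iSup_le fun N => le_trans (ENNReal.le_tsum γ) (hSle N)
  have hTot_le : (∑' γ : Γ, ∑' n : ℕ, eStep e Γ (1 : G) (n + 1) ↑γ) ≤ 1 := by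
    rw [tsum_tsum_eq_iSup fun (γ : Γ) n => eStep e Γ (1 : G) (n + 1) ↑γ]
    exact iSup_le hSle
  -- real/ennreal conversion of the hitting probabilities
  have hstep_nonneg : ∀ (x : G) (n : ℕ) (γ : G), 0 ≤ stepHit μ Γ x n γ := by
    intro x n γ
    refine tsum_nonneg fun w => ?_
    split_ifs
    · exact Finset.prod_nonneg fun i _ => hpos _
    · exact le_rfl
  have hstep_toReal : ∀ (n : ℕ) (γ : G),
      stepHit μ Γ 1 n γ = (eStep e Γ (1 : G) n γ).toReal := by
    intro n γ
    rw [← hstep_eq, ENNReal.toReal_ofReal (hstep_nonneg _ _ _)]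
  have hsummable_step : ∀ γ : Γ, Summable (fun n : ℕ => stepHit μ Γ 1 (n + 1) ↑γ) := by
    intro γ
    have h1 : (∑' n : ℕ, eStep e Γ (1 : G) (n + 1) ↑γ) ≠ ∞ :=
      ne_top_of_le_ne_top ENNReal.one_ne_top (hHit_le γ)
    exact (ENNReal.summable_toReal h1).congr fun n => (hstep_toReal (n + 1) ↑γ).symm
  have hhit_eq : ∀ γ : Γ, ENNReal.ofReal (hitProb μ Γ 1 ↑γ)
      = ∑' n : ℕ, eStep e Γ (1 : G) (n + 1) ↑γ := by
    intro γ
    rw [hitProb, ENNReal.ofReal_tsum_of_nonneg (fun n => hstep_nonneg _ _ _) (hsummable_step γ)]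
    exact tsum_congr fun n => hstep_eq 1 (n + 1) ↑γ
  have hhit_nonneg : ∀ γ : Γ, 0 ≤ hitProb μ Γ 1 ↑γ := fun γ =>
    tsum_nonneg fun n => hstep_nonneg _ _ _
  have hsummable_hit : Summable (fun γ : Γ => hitProb μ Γ 1 ↑γ) := by
    have h1 : (∑' γ : Γ, ∑' n : ℕ, eStep e Γ (1 : G) (n + 1) ↑γ) ≠ ∞ :=
      ne_top_of_le_ne_top ENNReal.one_ne_top hTot_le
    refine (ENNReal.summable_toReal h1).congr fun γ => ?_
    rw [← hhit_eq γ, ENNReal.toReal_ofReal (hhit_nonneg γ)]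
  have hrec1 : (∑' γ : Γ, ∑' n : ℕ, eStep e Γ (1 : G) (n + 1) ↑γ) = 1 := by
    calc (∑' γ : Γ, ∑' n : ℕ, eStep e Γ (1 : G) (n + 1) ↑γ)
        = ∑' γ : Γ, ENNReal.ofReal (hitProb μ Γ 1 ↑γ) :=
          tsum_congr fun γ => (hhit_eq γ).symm
      _ = ENNReal.ofReal (∑' γ : Γ, hitProb μ Γ 1 ↑γ) :=
          (ENNReal.ofReal_tsum_of_nonneg (fun γ => hhit_nonneg γ) hsummable_hit).symm
      _ = 1 := by rw [hrec 1, ENNReal.ofReal_one]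
  -- measure-theoretic part
  refine Measure.ext fun A hA => ?_
  rw [Measure.sum_apply _ hA]
  simp only [Measure.smul_apply, smul_eq_mul]
  set H : G → ℝ≥0∞ := fun y => ν ((fun p => y • p) ⁻¹' A) with hH
  have hmapA : ∀ g : G, (Measure.map (fun p => g • p) ν) A = H g := fun g =>
    Measure.map_apply (hmeas g) hA
  have hHarm : ∀ y : G, H y = ∑' g : G, e g * H (y * g) := by
    intro y
    calc H y = (convMeasure μ ν) ((fun p => y • p) ⁻¹' A) := by
          rw [hH]; dsimp only; rw [hstat]
      _ = ∑' g : G, e g * (Measure.map (fun p => g • p) ν) ((fun p => y • p) ⁻¹' A) := by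
          rw [convMeasure, Measure.sum_apply _ (hmeas y hA)]
          simp only [Measure.smul_apply, smul_eq_mul]
          rfl
      _ = ∑' g : G, e g * H (y * g) := by
          refine tsum_congr fun g => ?_
          congr 1
          rw [Measure.map_apply (hmeas g) (hmeas y hA), hH]
          congr 1
          ext p
          simp [Set.mem_preimage, mul_smul]
  have hHle : ∀ y : G, H y ≤ 1 := by
    intro y
    calc H y ≤ ν Set.univ := measure_mono (Set.subset_univ _)
      _ = 1 := measure_univ
  have hmain := hit_expansion e he1 Γ H hHarm hHle 1 hrec1
  calc (∑' γ : Γ, ENNReal.ofReal (hitProb μ Γ 1 ↑γ)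
          * (Measure.map (fun x => (γ : G) • x) ν) A)
      = ∑' γ : Γ, (∑' n : ℕ, eStep e Γ (1 : G) (n + 1) ↑γ) * H ↑γ := by
        refine tsum_congr fun γ => ?_
        rw [hmapA, hhit_eq]
    _ = H 1 := hmain.symm
    _ = ν A := by
        rw [hH]
        dsimp only
        congr 1
        ext p
        simp [one_smul]
end
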